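/- arXiv:2509.10268 — 6 statements merged into one kernel-verified Lean document; each statement's English description precedes it below -/
import Mathlib

section
/- For every ε ∈ (0,1) there exist an integer K ≥ 2, a probability space carrying a real-valued random variable X and a categorical random variable Y with values in {1,…,K} and P(Y=k) > 0 for all k, and bijections ℓ₁, ℓ₂ of {1,…,K}, such that ξ(X, ℓ₁∘Y) − ξ(X, ℓ₂∘Y) > 1 − ε; in particular max_{ℓ∈ℒ_Y} ξ(X, ℓ(Y)) − min_{ℓ∈ℒ_Y} ξ(X, ℓ(Y)) > 1 − ε. -/
open MeasureTheory ProbabilityTheory Filter Set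

noncomputable section

/-- Variance of a real-valued random variable. -/
def var {Ω : Type*} [MeasurableSpace Ω] (P : Measure Ω) (f : Ω → ℝ) : ℝ :=
  ∫ ω, (f ω) ^ 2 ∂P - (∫ ω, f ω ∂P) ^ 2

/-- Chatterjee's coefficient
`ξ(X,W) = ∫ Var(P(W ≥ t ∣ X)) dF(t) / ∫ Var(1{W ≥ t}) dF(t)`,
where the integrals are taken with respect to the distribution of `W`. -/
def xi {Ω : Type*} [MeasurableSpace Ω] (P : Measure Ω) (X : Ω → ℝ) (W : Ω → ℝ) : ℝ :=
  (∫ t, var P (P[(fun ω => if t ≤ W ω then (1 : ℝ) else 0) |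
      MeasurableSpace.comap X inferInstance]) ∂(Measure.map W P)) /
    (∫ t, var P (fun ω => if t ≤ W ω then (1 : ℝ) else 0) ∂(Measure.map W P))

/-!
Let `(X, Z)` be uniform on `Fin n × Fin n` and label the cell `(X, Z)` by its lexicographic rank
`ℓ₁ = n X + Z + 1` or by its column-first rank `ℓ₂ = n Z + X + 1`. Both labels are uniform on
`1, …, N`, `N = n²`, so the two denominators of `ξ` coincide, and they equal
`(N² - 1) / (6 N²) ≥ 1/8`.

For `ℓ₁`, a threshold `t` splits at most one row, so `P(ℓ₁ ≥ t ∣ X)` is `0` or `1` off that row;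
by the law of total variance the numerator integrand is within `1/(4n)` of the denominator one.
For `ℓ₂`, `P(ℓ₂ ≥ t ∣ X)` takes values in an interval of length `1/n`, so by Popoviciu's
inequality the numerator integrand is at most `1/(4n²)`. Hence `ξ(X, ℓ₁) - ξ(X, ℓ₂) ≥ 1 - 3/n`.
-/

open scoped BigOperators

lemma Function.Injective.measurableEmbedding_of_finite {α γ : Type*} [Finite α]
    [MeasurableSpace α] [MeasurableSingletonClass α] [MeasurableSpace γ]
    [MeasurableSingletonClass γ] {g : α → γ} (hg : Function.Injective g) :
    MeasurableEmbedding g :=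
  ⟨hg, measurable_of_finite g, fun s _ => (s.toFinite.image g).measurableSet⟩

lemma xi_eq_of_measurableEmbedding {Ω : Type*} [MeasurableSpace Ω] (P : Measure Ω)
    (X : Ω → ℝ) {W : Ω → ℝ} (hW : MeasurableEmbedding W) :
    xi P X W =
      (∫ ω₀, var P (P[(fun ω => if W ω₀ ≤ W ω then (1 : ℝ) else 0) |
          MeasurableSpace.comap X inferInstance]) ∂P) /
        ∫ ω₀, var P (fun ω => if W ω₀ ≤ W ω then (1 : ℝ) else 0) ∂P := by
  rw [xi, hW.integral_map, hW.integral_map]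

section Variance

variable {Ω : Type*} [MeasurableSpace Ω] {P : Measure Ω} {f : Ω → ℝ}

lemma var_congr_ae {g : Ω → ℝ} (hfg : f =ᵐ[P] g) : var P f = var P g := by
  rw [var, var, integral_congr_ae hfg, integral_congr_ae (hfg.mono fun _ h => by rw [h])]

variable [IsProbabilityMeasure P]

lemma var_const (c : ℝ) : var P (fun _ => c) = 0 := by
  simp [var]

lemma var_eq_variance (hf : MemLp f 2 P) : var P f = Var[f; P] := by
  rw [var, variance_eq_sub hf]
  rfl

lemma var_le_of_mem_Icc {a b : ℝ} (hf : Measurable f) (hab : ∀ ω, f ω ∈ Icc a b) :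
    var P f ≤ ((b - a) / 2) ^ 2 := by
  rw [var_eq_variance (memLp_of_bounded (ae_of_all _ hab) hf.aestronglyMeasurable 2)]
  exact variance_le_sq_of_bounded (ae_of_all _ hab) hf.aemeasurable

end Variance

section Uniform

variable {α β : Type*} [Fintype α] [Nonempty α] [MeasurableSpace α] [MeasurableSingletonClass α]

variable (α) in
abbrev uniformMeasure : Measure α := (PMF.uniformOfFintype α).toMeasure

lemma integral_uniformMeasure (f : α → ℝ) : ∫ x, f x ∂uniformMeasure α = 𝔼 x, f x := by
  simp [PMF.integral_eq_sum, PMF.uniformOfFintype_apply, Fintype.expect_eq_sum_div_card,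
    Finset.mul_sum, div_eq_inv_mul]

lemma var_uniformMeasure (f : α → ℝ) :
    var (uniformMeasure α) f = 𝔼 x, f x ^ 2 - (𝔼 x, f x) ^ 2 := by
  rw [var, integral_uniformMeasure, integral_uniformMeasure]

lemma uniformMeasure_pos_of_nonempty {s : Set α} (hs : s.Nonempty) : 0 < uniformMeasure α s := by
  rw [pos_iff_ne_zero, Ne, PMF.toMeasure_apply_eq_zero_iff _ .of_discrete, Set.not_disjoint_iff]
  exact ⟨hs.some, PMF.mem_support_uniformOfFintype _, hs.some_mem⟩

variable [Fintype β] [Nonempty β] [MeasurableSpace β] [MeasurableSingletonClass β]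

lemma condExp_comap_fst_uniformMeasure (f : α × β → ℝ) :
    (uniformMeasure (α × β))[f | MeasurableSpace.comap Prod.fst inferInstance]
      =ᵐ[uniformMeasure (α × β)] fun ω => 𝔼 b, f (ω.1, b) := by
  have hm : MeasurableSpace.comap (Prod.fst : α × β → α) inferInstance
      ≤ (inferInstance : MeasurableSpace (α × β)) :=
    measurable_fst.comap_le
  refine (ae_eq_condExp_of_forall_setIntegral_eq hm .of_finite
    (fun _ _ _ => Integrable.of_finite.integrableOn) ?_ ?_).symm
  · rintro _ ⟨s, -, rfl⟩ -
    classical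
    have hs : MeasurableSet (Prod.fst ⁻¹' s : Set (α × β)) := measurable_fst .of_discrete
    rw [← integral_indicator hs, ← integral_indicator hs, integral_uniformMeasure,
      integral_uniformMeasure, ← Finset.univ_product_univ, Finset.expect_product,
      Finset.expect_product]
    refine Finset.expect_congr rfl fun a _ => ?_
    by_cases ha : a ∈ s <;> simp [Set.indicator, ha]
  · exact ((measurable_of_finite fun a => 𝔼 b, f (a, b)).comp
      (comap_measurable Prod.fst)).aestronglyMeasurable

lemma var_condExp_comap_injective_fst {g : α → ℝ} (hg : Function.Injective g)
    (f : α × β → ℝ) :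
    var (uniformMeasure (α × β))
        ((uniformMeasure (α × β))[f |
          MeasurableSpace.comap (fun ω : α × β => g ω.1) inferInstance])
      = var (uniformMeasure (α × β)) (fun ω => 𝔼 b, f (ω.1, b)) := by
  have hX : MeasurableSpace.comap (fun ω : α × β => g ω.1) inferInstance
      = MeasurableSpace.comap Prod.fst inferInstance := by
    rw [← hg.measurableEmbedding_of_finite.comap_eq, MeasurableSpace.comap_comp]
    rfl
  rw [hX]
  exact var_congr_ae (condExp_comap_fst_uniformMeasure f)

lemma var_sub_var_rowAverage (f : α × β → ℝ) :
    var (uniformMeasure (α × β)) f - var (uniformMeasure (α × β)) (fun ω => 𝔼 b, f (ω.1, b))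
      = 𝔼 a, var (uniformMeasure β) (fun b => f (a, b)) := by
  simp only [var_uniformMeasure, ← Finset.univ_product_univ, Finset.expect_product,
    Finset.expect_const Finset.univ_nonempty, Finset.expect_sub_distrib]
  ring

end Uniform

section Counting

lemma sum_range_natCast (N : ℕ) : ∑ i ∈ Finset.range N, (i : ℝ) = N * (N - 1) / 2 := by
  induction N with
  | zero => simp
  | succ N ih => rw [Finset.sum_range_succ, ih]; push_cast; ring

lemma sum_range_mul_sub (N : ℕ) :
    ∑ i ∈ Finset.range N, (i : ℝ) * (N - i) = (N - 1) * N * (N + 1) / 6 := by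
  induction N with
  | zero => simp
  | succ N ih =>
    have hsplit : ∀ i : ℕ, (i : ℝ) * ((N + 1 : ℕ) - i) = i * (N - i) + i := fun i => by
      push_cast; ring
    simp only [hsplit, Finset.sum_add_distrib, Finset.sum_range_succ _ N, ih, sum_range_natCast]
    push_cast
    ring

variable {N : ℕ}

lemma expect_fin_indicator_lt (i : Fin N) :
    𝔼 k : Fin N, (if i < k then (1 : ℝ) else 0) = (N - 1 - i) / N := by
  rw [Fintype.expect_eq_sum_div_card, Finset.sum_boole, Fintype.card_fin]
  congr
  have hi := i.is_lt
  rw [Finset.filter_lt_eq_Ioi, Fin.card_Ioi, Nat.cast_sub (by omega), Nat.cast_sub (by omega),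
    Nat.cast_one]

lemma expect_fin_indicator_le (i : Fin N) :
    𝔼 k : Fin N, (if i ≤ k then (1 : ℝ) else 0) = (N - i) / N := by
  rw [Fintype.expect_eq_sum_div_card, Finset.sum_boole, Fintype.card_fin]
  congr
  rw [Finset.filter_le_eq_Ici, Fin.card_Ici, Nat.cast_sub i.is_lt.le]

lemma expect_var_indicator_equiv_le {α : Type*} [Fintype α] [Nonempty α] [MeasurableSpace α]
    [MeasurableSingletonClass α] (σ : α ≃ Fin N) :
    𝔼 ω₀, var (uniformMeasure α) (fun ω => if σ ω₀ ≤ σ ω then (1 : ℝ) else 0)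
      = ((N : ℝ) ^ 2 - 1) / (6 * N ^ 2) := by
  have hN : (0 : ℝ) < N := by
    rw [← Fintype.card_fin N, ← Fintype.card_congr σ]
    exact_mod_cast Fintype.card_pos
  have hp : ∀ ω₀, 𝔼 ω, (if σ ω₀ ≤ σ ω then (1 : ℝ) else 0) = (N - σ ω₀) / N := fun ω₀ => by
    rw [Fintype.expect_equiv σ _ (fun k => if σ ω₀ ≤ k then (1 : ℝ) else 0) fun _ => rfl,
      expect_fin_indicator_le]
  simp only [var_uniformMeasure, ite_pow, one_pow, zero_pow two_ne_zero, hp]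
  rw [Fintype.expect_equiv σ _ (fun i : Fin N => ((N : ℝ) - i) / N - (((N : ℝ) - i) / N) ^ 2)
      fun _ => rfl, Fintype.expect_eq_sum_div_card, Fintype.card_fin,
    Fin.sum_univ_eq_sum_range (fun i => ((N : ℝ) - i) / N - (((N : ℝ) - i) / N) ^ 2)]
  have hterm : ∀ i : ℕ, ((N : ℝ) - i) / N - (((N : ℝ) - i) / N) ^ 2 = i * (N - i) / N ^ 2 :=
    fun i => by field_simp; ring
  simp only [hterm, ← Finset.sum_div, sum_range_mul_sub]
  field_simp
  ring

end Counting

section Labelling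

variable {α : Type*} {N : ℕ}

def labelOf (σ : α ≃ Fin N) (ω : α) : ℕ := σ ω + 1

lemma labelOf_mem_Icc (σ : α ≃ Fin N) (ω : α) : labelOf σ ω ∈ Finset.Icc 1 N := by
  simp only [labelOf, Finset.mem_Icc]
  omega

lemma labelOf_symm_sub_one (σ : α ≃ Fin N) {k : ℕ} (hk : k - 1 < N) (hk₁ : 1 ≤ k) :
    labelOf σ (σ.symm ⟨k - 1, hk⟩) = k := by
  simp only [labelOf, Equiv.apply_symm_apply]
  omega

lemma cast_labelOf_le_iff (σ : α ≃ Fin N) (ω₀ ω : α) :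
    ((labelOf σ ω₀ : ℕ) : ℝ) ≤ labelOf σ ω ↔ σ ω₀ ≤ σ ω := by
  rw [Nat.cast_le, labelOf, labelOf, add_le_add_iff_right, Fin.val_fin_le]

lemma injective_cast_labelOf (σ : α ≃ Fin N) :
    Function.Injective fun ω => ((labelOf σ ω : ℕ) : ℝ) := fun ω ω' h => by
  simpa [labelOf, Fin.val_inj] using h

def relabel (τ : Equiv.Perm (Fin N)) (k : ℕ) : ℕ :=
  if h : k - 1 < N then τ ⟨k - 1, h⟩ + 1 else k

lemma relabel_labelOf (σ : α ≃ Fin N) (τ : Equiv.Perm (Fin N)) (ω : α) :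
    relabel τ (labelOf σ ω) = labelOf (σ.trans τ) ω := by
  simp [relabel, labelOf]

lemma relabel_symm_relabel (τ : Equiv.Perm (Fin N)) {k : ℕ} (hk : k ∈ Set.Icc 1 N) :
    relabel τ.symm (relabel τ k) = k := by
  simp only [Set.mem_Icc] at hk
  have hk' : k - 1 < N := by omega
  simp only [relabel, hk', dite_true, Nat.add_sub_cancel, Fin.is_lt, Fin.eta,
    Equiv.symm_apply_apply]
  omega

lemma mapsTo_relabel (τ : Equiv.Perm (Fin N)) :
    Set.MapsTo (relabel τ) (Set.Icc 1 N) (Set.Icc 1 N) := fun k hk => by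
  have hk' : k - 1 < N := by simp only [Set.mem_Icc] at hk; omega
  simp only [relabel, hk', dite_true, Set.mem_Icc]
  omega

lemma bijOn_relabel (τ : Equiv.Perm (Fin N)) :
    Set.BijOn (relabel τ) (Set.Icc 1 N) (Set.Icc 1 N) :=
  Set.InvOn.bijOn ⟨fun _ hk => relabel_symm_relabel τ hk,
      fun _ hk => by simpa using relabel_symm_relabel τ.symm hk⟩
    (mapsTo_relabel τ) (mapsTo_relabel τ.symm)

variable [Fintype α] [Nonempty α] [MeasurableSpace α] [MeasurableSingletonClass α]

lemma uniformMeasure_labelOf_eq_pos (σ : α ≃ Fin N) {k : ℕ} (hk : k ∈ Finset.Icc 1 N) :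
    0 < uniformMeasure α {ω | labelOf σ ω = k} := by
  simp only [Finset.mem_Icc] at hk
  have hk' : k - 1 < N := by omega
  exact uniformMeasure_pos_of_nonempty ⟨σ.symm ⟨k - 1, hk'⟩, labelOf_symm_sub_one σ hk' hk.1⟩

lemma xi_uniformMeasure_labelOf (X : α → ℝ) (σ : α ≃ Fin N) :
    xi (uniformMeasure α) X (fun ω => (labelOf σ ω : ℝ)) =
      (𝔼 ω₀, var (uniformMeasure α) ((uniformMeasure α)[fun ω =>
          if σ ω₀ ≤ σ ω then (1 : ℝ) else 0 | MeasurableSpace.comap X inferInstance])) /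
        (((N : ℝ) ^ 2 - 1) / (6 * N ^ 2)) := by
  have hind : ∀ ω₀, (fun ω => if ((labelOf σ ω₀ : ℕ) : ℝ) ≤ labelOf σ ω then (1 : ℝ) else 0)
      = fun ω => if σ ω₀ ≤ σ ω then (1 : ℝ) else 0 := fun ω₀ =>
    funext fun ω => if_congr (cast_labelOf_le_iff σ ω₀ ω) rfl rfl
  rw [xi_eq_of_measurableEmbedding _ _ (injective_cast_labelOf σ).measurableEmbedding_of_finite,
    integral_uniformMeasure, integral_uniformMeasure]
  simp only [hind, expect_var_indicator_equiv_le]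

end Labelling

lemma Fin.cast_val_injective {n : ℕ} : Function.Injective fun a : Fin n => ((a : ℕ) : ℝ) :=
  fun _ _ h => Fin.val_injective (Nat.cast_injective h)

lemma finProdFinEquiv_lt_of_fst_lt {m n : ℕ} {a a' : Fin m} (c c' : Fin n) (h : a < a') :
    finProdFinEquiv (a, c) < finProdFinEquiv (a', c') := by
  rw [Fin.lt_def, finProdFinEquiv_apply_val, finProdFinEquiv_apply_val]
  have hc := c.is_lt
  have ha : a.val + 1 ≤ a'.val := h
  nlinarith

lemma fst_le_of_finProdFinEquiv_le {m n : ℕ} {a a' : Fin m} {c c' : Fin n}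
    (h : finProdFinEquiv (a, c) ≤ finProdFinEquiv (a', c')) : a ≤ a' :=
  not_lt.mp fun h' => (finProdFinEquiv_lt_of_fst_lt c' c h').not_ge h

section Grid

variable {n : ℕ} [NeZero n]

local notation "𝕌" => uniformMeasure (Fin n × Fin n)

local notation "𝒢" =>
  MeasurableSpace.comap (fun ω : Fin n × Fin n => (((Prod.fst ω : Fin n) : ℕ) : ℝ)) inferInstance

lemma var_sub_var_condExp_lex_le (ω₀ : Fin n × Fin n) :
    var 𝕌 (fun ω => if finProdFinEquiv ω₀ ≤ finProdFinEquiv ω then (1 : ℝ) else 0)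
      - var 𝕌 (𝕌[fun ω => if finProdFinEquiv ω₀ ≤ finProdFinEquiv ω then (1 : ℝ) else 0 | 𝒢])
      ≤ 1 / (4 * n) := by
  obtain ⟨a, c⟩ := ω₀
  rw [var_condExp_comap_injective_fst Fin.cast_val_injective, var_sub_var_rowAverage]
  have hconst : ∀ j ≠ a, var (uniformMeasure (Fin n))
      (fun r => if finProdFinEquiv (a, c) ≤ finProdFinEquiv (j, r) then (1 : ℝ) else 0) = 0 := by
    intro j hj
    have hrow : (fun r => if finProdFinEquiv (a, c) ≤ finProdFinEquiv (j, r) then (1 : ℝ) else 0)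
        = fun _ => if a < j then 1 else 0 := by
      funext r
      rcases hj.lt_or_gt with hja | haj
      · simp [hja.not_gt, (finProdFinEquiv_lt_of_fst_lt r c hja).not_ge]
      · simp [haj, (finProdFinEquiv_lt_of_fst_lt c r haj).le]
    rw [hrow, var_const]
  have hrow : var (uniformMeasure (Fin n))
      (fun r => if finProdFinEquiv (a, c) ≤ finProdFinEquiv (a, r) then (1 : ℝ) else 0)
        ≤ 1 / 4 := by
    have hmem : ∀ r, (if finProdFinEquiv (a, c) ≤ finProdFinEquiv (a, r) then (1 : ℝ) else 0)
        ∈ Icc 0 1 := fun r => by split_ifs <;> simp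
    exact (var_le_of_mem_Icc (measurable_of_finite _) hmem).trans_eq (by norm_num)
  rw [Fintype.expect_eq_sum_div_card, Fintype.sum_eq_single a hconst, Fintype.card_fin]
  calc _ ≤ 1 / 4 / (n : ℝ) := by gcongr
    _ = 1 / (4 * n) := by rw [div_div]

lemma var_condExp_colex_le (ω₀ : Fin n × Fin n) :
    var 𝕌 (𝕌[fun ω => if finProdFinEquiv ω₀.swap ≤ finProdFinEquiv ω.swap then (1 : ℝ) else 0
      | 𝒢]) ≤ 1 / (4 * n ^ 2) := by
  obtain ⟨a, c⟩ := ω₀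
  rw [var_condExp_comap_injective_fst Fin.cast_val_injective]
  simp only [Prod.swap_prod_mk]
  have hlo : ∀ j : Fin n, ((n : ℝ) - 1 - c) / n
      ≤ 𝔼 r, if finProdFinEquiv (c, a) ≤ finProdFinEquiv (r, j) then (1 : ℝ) else 0 := by
    intro j
    rw [← expect_fin_indicator_lt]
    refine Finset.expect_le_expect fun r _ => ?_
    by_cases hcr : c < r
    · simp [hcr, (finProdFinEquiv_lt_of_fst_lt a j hcr).le]
    · simp only [hcr, if_false]
      split_ifs <;> norm_num
  have hhi : ∀ j : Fin n,
      (𝔼 r, if finProdFinEquiv (c, a) ≤ finProdFinEquiv (r, j) then (1 : ℝ) else 0)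
        ≤ ((n : ℝ) - c) / n := by
    intro j
    rw [← expect_fin_indicator_le]
    refine Finset.expect_le_expect fun r _ => ?_
    by_cases hcr : finProdFinEquiv (c, a) ≤ finProdFinEquiv (r, j)
    · simp [hcr, fst_le_of_finProdFinEquiv_le hcr]
    · simp only [hcr, if_false]
      split_ifs <;> norm_num
  have hmem : ∀ ω : Fin n × Fin n,
      (𝔼 r, if finProdFinEquiv (c, a) ≤ finProdFinEquiv (r, ω.1) then (1 : ℝ) else 0)
        ∈ Icc (((n : ℝ) - 1 - c) / n) (((n : ℝ) - c) / n) := fun ω => ⟨hlo ω.1, hhi ω.1⟩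
  refine (var_le_of_mem_Icc (measurable_of_finite _) hmem).trans_eq ?_
  have hn : (n : ℝ) ≠ 0 := Nat.cast_ne_zero.mpr (NeZero.ne n)
  field_simp
  ring

lemma one_sub_three_div_le_xi_lex_sub_xi_colex (hn : 2 ≤ n) :
    1 - 3 / n ≤ xi 𝕌 (fun ω => ((ω.1 : ℕ) : ℝ)) (fun ω => (labelOf finProdFinEquiv ω : ℝ))
      - xi 𝕌 (fun ω => ((ω.1 : ℕ) : ℝ))
        (fun ω => (labelOf ((Equiv.prodComm (Fin n) (Fin n)).trans finProdFinEquiv) ω : ℝ)) := by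
  rw [xi_uniformMeasure_labelOf, xi_uniformMeasure_labelOf, ← sub_div]
  simp only [Equiv.trans_apply, Equiv.prodComm_apply]
  set D : ℝ := (((n * n : ℕ) : ℝ) ^ 2 - 1) / (6 * ((n * n : ℕ) : ℝ) ^ 2) with hD_def
  have hn' : (2 : ℝ) ≤ n := by exact_mod_cast hn
  have hD : 1 / 8 ≤ D := by
    rw [hD_def, le_div_iff₀ (by positivity)]
    have h4 : (4 : ℝ) ≤ n * n := by nlinarith
    push_cast
    nlinarith
  have hlex := Finset.expect_le_expect (s := Finset.univ) fun ω₀ _ =>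
    sub_le_comm.mp (var_sub_var_condExp_lex_le (n := n) ω₀)
  rw [Finset.expect_sub_distrib, Finset.expect_const Finset.univ_nonempty,
    expect_var_indicator_equiv_le, ← hD_def] at hlex
  have hcolex := Finset.expect_le Finset.univ_nonempty fun ω₀ _ =>
    var_condExp_colex_le (n := n) ω₀
  rw [le_div_iff₀ (by linarith)]
  refine le_trans ?_ (sub_le_sub hlex hcolex)
  have hsq : 1 / (4 * (n : ℝ) ^ 2) ≤ 1 / (8 * n) := by
    rw [div_le_div_iff₀ (by positivity) (by positivity)]
    nlinarith
  have hDn : 3 / n * (1 / 8) ≤ 3 / n * D := by gcongr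
  have hsum : 1 / (4 * (n : ℝ)) + 1 / (8 * n) = 3 / n * (1 / 8) := by ring
  rw [sub_mul, one_mul]
  linarith

end Grid

theorem proposition1_general (ε : ℝ) (hε0 : 0 < ε) :
    ∃ (Ω : Type) (_ : MeasurableSpace Ω) (P : Measure Ω) (_ : IsProbabilityMeasure P)
      (K : ℕ) (_ : 2 ≤ K) (X : Ω → ℝ) (Y : Ω → ℕ),
      Measurable X ∧ Measurable Y ∧ (∀ ω, Y ω ∈ Finset.Icc 1 K) ∧
      (∀ k ∈ Finset.Icc 1 K, 0 < P {ω | Y ω = k}) ∧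
      ∃ ℓ₁ ℓ₂ : ℕ → ℕ,
        Set.BijOn ℓ₁ (Set.Icc 1 K) (Set.Icc 1 K) ∧
        Set.BijOn ℓ₂ (Set.Icc 1 K) (Set.Icc 1 K) ∧
        xi P X (fun ω => (ℓ₁ (Y ω) : ℝ)) - xi P X (fun ω => (ℓ₂ (Y ω) : ℝ)) > 1 - ε := by
  obtain ⟨n, hn⟩ := exists_nat_gt (3 / ε + 2)
  have h3 : 0 < 3 / ε := by positivity
  have hn2 : 2 ≤ n := by exact_mod_cast (by linarith : (2 : ℝ) < n).le
  have hεn : 3 / (n : ℝ) < ε := (div_lt_comm₀ (by linarith) hε0).mpr (by linarith)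
  have : NeZero n := ⟨by omega⟩
  let τ : Equiv.Perm (Fin (n * n)) :=
    finProdFinEquiv.symm.trans ((Equiv.prodComm (Fin n) (Fin n)).trans finProdFinEquiv)
  refine ⟨Fin n × Fin n, inferInstance, uniformMeasure _, inferInstance, n * n, by nlinarith,
    fun ω => ((ω.1 : ℕ) : ℝ), labelOf finProdFinEquiv, measurable_of_finite _,
    measurable_of_finite _, labelOf_mem_Icc _, fun _ hk => uniformMeasure_labelOf_eq_pos _ hk,
    id, relabel τ, Set.bijOn_id _, bijOn_relabel τ, ?_⟩
  have hτ : finProdFinEquiv.trans τ = (Equiv.prodComm (Fin n) (Fin n)).trans finProdFinEquiv := by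
    simp [τ, ← Equiv.trans_assoc]
  simp only [id, relabel_labelOf, hτ]
  linarith [one_sub_three_div_le_xi_lex_sub_xi_colex hn2]

/-- Proposition 1: the value of Chatterjee's `ξ` applied to a categorical `Y` (encoded as
integers `1,…,K`) can depend arbitrarily strongly on the chosen bijective labelling. -/
theorem proposition1 (ε : ℝ) (hε0 : 0 < ε) (hε1 : ε < 1) :
    ∃ (Ω : Type) (_ : MeasurableSpace Ω) (P : Measure Ω) (_ : IsProbabilityMeasure P)
      (K : ℕ) (_ : 2 ≤ K) (X : Ω → ℝ) (Y : Ω → ℕ),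
      Measurable X ∧ Measurable Y ∧ (∀ ω, Y ω ∈ Finset.Icc 1 K) ∧
      (∀ k ∈ Finset.Icc 1 K, 0 < P {ω | Y ω = k}) ∧
      ∃ ℓ₁ ℓ₂ : ℕ → ℕ,
        Set.BijOn ℓ₁ (Set.Icc 1 K) (Set.Icc 1 K) ∧
        Set.BijOn ℓ₂ (Set.Icc 1 K) (Set.Icc 1 K) ∧
        xi P X (fun ω => (ℓ₁ (Y ω) : ℝ)) - xi P X (fun ω => (ℓ₂ (Y ω) : ℝ)) > 1 - ε :=
  proposition1_general ε hε0

end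
end

section
/- Suppose Y = f(X,U) almost surely, where U, U′ are Uniform(0,1) random variables with X, U, U′ jointly independent, and set Y′ := f(X,U′). Then there exists a Borel measurable function h : ℋ → {1,…,K} with Y = h(X) almost surely if and only if there exists a bijection ℓ of {1,…,K} with Y = ℓ(Y′) almost surely. -/
open MeasureTheory ProbabilityTheory Filter Set

noncomputable section

def ind {Ω : Type*} (Y : Ω → ℕ) (k : ℕ) : Ω → ℝ := fun ω => if Y ω = k then 1 else 0

/-- `Q_k(X) = P(Y = k ∣ X)`, the conditional expectation of `1{Y=k}` given `σ(X)`. -/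
def condProb {Ω H : Type*} [MeasurableSpace Ω] [MeasurableSpace H]
    (P : Measure Ω) (X : Ω → H) (Y : Ω → ℕ) (k : ℕ) : Ω → ℝ :=
  P[ind Y k | MeasurableSpace.comap X inferInstance]

/-- `f(x,u) = min{k ∈ {1,…,K} : Σ_{j=1}^k g_j(x) > u}`. -/
def catf (K : ℕ) {H : Type*} (g : ℕ → H → ℝ) (x : H) (u : ℝ) : ℕ :=
  sInf {k | k ∈ Finset.Icc 1 K ∧ u < ∑ j ∈ Finset.Icc 1 k, g j x}

/-! If `Y = h(X)`, then `Q_k(X) = 1{Y = k}`, so the partial sums `Σ_{j ≤ k} g_j(X)` jump from `0`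
to `1` exactly at `k = Y`, and `f(X, u) = Y` for every `u ∈ (0,1)`: take `ℓ = id`.

Conversely, if `f(X,U) = ℓ(f(X,U'))` a.s., independence turns this into `f(x,u) = ℓ(f(x,u'))`
for a.e. `x` and Lebesgue-a.e. `(u,u') ∈ (0,1)²`, so `f(x,·)` is a.e. constant on `(0,1)`.
Its level sets are intervals, because the set of admissible `k` shrinks as `u` grows; hence
`f(x,·)` is constant on `(0,1)` and `h(x) := f(x,1/2)` works. -/

theorem Nat.sInf_eq_iff {s : Set ℕ} {n : ℕ} :
    sInf s = n ↔ (n ∈ s ∧ ∀ m < n, m ∉ s) ∨ (n = 0 ∧ s = ∅) := by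
  constructor
  · rintro rfl
    rcases s.eq_empty_or_nonempty with hs | hs
    · exact Or.inr ⟨by rw [hs, Nat.sInf_empty], hs⟩
    · exact Or.inl ⟨Nat.sInf_mem hs, fun m => Nat.notMem_of_lt_sInf⟩
  · rintro (⟨hn, hlt⟩ | ⟨rfl, rfl⟩)
    · exact le_antisymm (Nat.sInf_le hn) (not_lt.1 fun h => hlt _ h (Nat.sInf_mem ⟨n, hn⟩))
    · exact Nat.sInf_empty

theorem measurable_sInf_nat {α : Type*} [MeasurableSpace α] {S : α → Set ℕ}
    (hS : ∀ k, Measurable fun a => k ∈ S a) : Measurable fun a => sInf (S a) := by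
  refine measurable_to_countable' fun n => ?_
  have hpre : (fun a => sInf (S a)) ⁻¹' {n} =
      {a | (n ∈ S a ∧ ∀ m, m < n → m ∉ S a) ∨ (n = 0 ∧ ∀ m, m ∉ S a)} := by
    ext a
    simp [Nat.sInf_eq_iff, Set.eq_empty_iff_forall_notMem]
  rw [hpre]
  exact Measurable.setOf (by fun_prop)

theorem ordConnected_preimage_sInf_of_antitone {α : Type*} [Preorder α] {S : α → Set ℕ}
    (hS : Antitone S) (h0 : ∀ u, 0 ∉ S u) (n : ℕ) :
    ((fun u => sInf (S u)) ⁻¹' {n}).OrdConnected := by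
  refine ⟨fun u₁ hu₁ u₂ hu₂ u hu => ?_⟩
  simp only [Set.mem_preimage, Set.mem_singleton_iff] at hu₁ hu₂ ⊢
  rcases (S u₂).eq_empty_or_nonempty with he | hne
  · have hn : n = 0 := by rw [← hu₂, he, Nat.sInf_empty]
    have he₁ : S u₁ = ∅ := (Nat.sInf_eq_zero.1 (hu₁.trans hn)).resolve_left (h0 u₁)
    have he' : S u = ∅ := Set.subset_empty_iff.1 (he₁ ▸ hS hu.1)
    rw [he', Nat.sInf_empty, hn]
  · have hne' : (S u).Nonempty := hne.mono (hS hu.2)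
    refine le_antisymm ?_ ?_
    · exact hu₂ ▸ csInf_le_csInf (OrderBot.bddBelow _) hne (hS hu.2)
    · exact hu₁ ▸ csInf_le_csInf (OrderBot.bddBelow _) hne' (hS hu.1)

theorem Ioo_subset_of_ordConnected_of_ae {a b : ℝ} {s : Set ℝ} (hs : s.OrdConnected)
    (h : ∀ᵐ u ∂volume.restrict (Ioo a b), u ∈ s) : Ioo a b ⊆ s := by
  have hex : ∀ c d, c < d → Ioo c d ⊆ Ioo a b → ∃ v ∈ Ioo c d, v ∈ s := by
    intro c d hcd hsub
    have : (ae (volume.restrict (Ioo c d))).NeBot := ae_restrict_neBot.2 (by simp [hcd])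
    exact ((ae_restrict_mem measurableSet_Ioo).and
      (ae_restrict_of_ae_restrict_of_subset hsub h)).exists
  intro u ⟨hau, hub⟩
  obtain ⟨v₁, hv₁, hv₁s⟩ := hex a u hau (Ioo_subset_Ioo_right hub.le)
  obtain ⟨v₂, hv₂, hv₂s⟩ := hex u b hub (Ioo_subset_Ioo_left hau.le)
  exact hs.out hv₁s hv₂s ⟨hv₁.2.le, hv₂.1.le⟩

theorem exists_ae_eq_const_of_ae_prod_eq {α β γ : Type*} [MeasurableSpace α] [MeasurableSpace β]
    {μ : Measure α} {ν : Measure β} [SFinite μ] [SFinite ν] [NeZero ν] {φ : α → γ} {ψ : β → γ}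
    (h : ∀ᵐ z ∂μ.prod ν, φ z.1 = ψ z.2) : ∃ c, ∀ᵐ u ∂μ, φ u = c := by
  have hswap : ∀ᵐ z ∂ν.prod μ, φ z.2 = ψ z.1 :=
    Measure.measurePreserving_swap.quasiMeasurePreserving.ae h
  obtain ⟨v, hv⟩ := (Measure.ae_ae_of_ae_prod hswap).exists
  exact ⟨ψ v, hv⟩

theorem ProbabilityTheory.IndepFun.ae_prod_of_ae {Ω α β : Type*} [MeasurableSpace Ω]
    [MeasurableSpace α] [MeasurableSpace β] {P : Measure Ω} [IsFiniteMeasure P]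
    {X : Ω → α} {V : Ω → β} (hXV : IndepFun X V P) (hX : Measurable X) (hV : Measurable V)
    {p : α × β → Prop} (hp : MeasurableSet {z | p z}) (h : ∀ᵐ ω ∂P, p (X ω, V ω)) :
    ∀ᵐ z ∂(P.map X).prod (P.map V), p z := by
  rw [← hXV.map_prod_eq_prod_map_map hX.aemeasurable hV.aemeasurable]
  exact (ae_map_iff (hX.prodMk hV).aemeasurable hp).2 h

theorem ae_mem_of_map_eq_restrict {Ω α : Type*} [MeasurableSpace Ω] [MeasurableSpace α]
    {P : Measure Ω} {V : Ω → α} {ν : Measure α} {s : Set α} (hV : Measurable V)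
    (hVdist : P.map V = ν.restrict s) (hs : MeasurableSet s) : ∀ᵐ ω ∂P, V ω ∈ s :=
  ae_of_ae_map hV.aemeasurable (hVdist ▸ ae_restrict_mem hs)

theorem condProb_ae_eq_ind_of_ae_eq_comp {Ω H : Type*} [MeasurableSpace Ω] [MeasurableSpace H]
    {P : Measure Ω} [IsFiniteMeasure P] {X : Ω → H} {Y : Ω → ℕ} {h : H → ℕ}
    (hX : Measurable X) (hh : Measurable h) (hYh : Y =ᵐ[P] fun ω => h (X ω)) (k : ℕ) :
    condProb P X Y k =ᵐ[P] ind Y k := by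
  have hind : ind Y k =ᵐ[P] ind (fun ω => h (X ω)) k :=
    hYh.mono fun ω hω => by simp only [ind, hω]
  have hφ : Measurable fun n : ℕ => if n = k then (1 : ℝ) else 0 := measurable_from_nat
  have hmeas : StronglyMeasurable[MeasurableSpace.comap X inferInstance]
      (ind (fun ω => h (X ω)) k) :=
    (hφ.comp (hh.comp (comap_measurable X))).stronglyMeasurable
  have hint : Integrable (ind (fun ω => h (X ω)) k) P :=
    (integrable_const (1 : ℝ)).mono' (hφ.comp (hh.comp hX)).aestronglyMeasurable
      (Eventually.of_forall fun ω => by unfold ind; split_ifs <;> simp)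
  calc condProb P X Y k
      =ᵐ[P] P[ind (fun ω => h (X ω)) k | MeasurableSpace.comap X inferInstance] :=
        condExp_congr_ae hind
    _ = ind (fun ω => h (X ω)) k := condExp_of_stronglyMeasurable hX.comap_le hmeas hint
    _ =ᵐ[P] ind Y k := hind.symm

section catf

variable {H : Type*} {K : ℕ} {g : ℕ → H → ℝ}

variable (K) in
theorem measurable_uncurry_catf [MeasurableSpace H]
    (hgm : ∀ k, Measurable (g k)) : Measurable (Function.uncurry (catf K g)) :=
  measurable_sInf_nat fun k => by fun_prop

theorem catf_le (x : H) (u : ℝ) : catf K g x u ≤ K := by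
  rcases Set.eq_empty_or_nonempty {k | k ∈ Finset.Icc 1 K ∧ u < ∑ j ∈ Finset.Icc 1 k, g j x}
    with he | hne
  · rw [catf, he, Nat.sInf_empty]
    exact Nat.zero_le K
  · exact (Finset.mem_Icc.1 (Nat.sInf_mem hne).1).2

theorem ordConnected_preimage_catf (x : H) (n : ℕ) : (catf K g x ⁻¹' {n}).OrdConnected :=
  ordConnected_preimage_sInf_of_antitone
    (S := fun u => {k | k ∈ Finset.Icc 1 K ∧ u < ∑ j ∈ Finset.Icc 1 k, g j x})
    (fun _ _ huv _ hk => ⟨hk.1, huv.trans_lt hk.2⟩)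
    (fun _ h => by simp at h) n

theorem catf_eq_of_eq_indicator {x : H} {y : ℕ} (hy : y ∈ Finset.Icc 1 K)
    (hg : ∀ j ∈ Finset.Icc 1 K, g j x = if y = j then 1 else 0) {u : ℝ} (hu : u ∈ Ioo 0 1) :
    catf K g x u = y := by
  rw [Finset.mem_Icc] at hy
  have hsum : ∀ k ≤ K, ∑ j ∈ Finset.Icc 1 k, g j x = if y ≤ k then 1 else 0 := by
    intro k hk
    rw [Finset.sum_congr rfl fun j hj => hg j (by simp only [Finset.mem_Icc] at hj ⊢; omega),
      Finset.sum_ite_eq]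
    simp [hy.1]
  have hset : {k | k ∈ Finset.Icc 1 K ∧ u < ∑ j ∈ Finset.Icc 1 k, g j x} = Icc y K := by
    ext k
    simp only [Set.mem_ofPred_eq, Finset.mem_Icc, Set.mem_Icc]
    constructor
    · rintro ⟨hk, hlt⟩
      rw [hsum k hk.2] at hlt
      split_ifs at hlt with hyk
      · exact ⟨hyk, hk.2⟩
      · linarith [hu.1]
    · rintro ⟨hyk, hkK⟩
      refine ⟨⟨by omega, hkK⟩, ?_⟩
      rw [hsum k hkK, if_pos hyk]
      exact hu.2
  rw [catf, hset, csInf_Icc hy.2]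

theorem catf_eqOn_of_ae_prod_eq {x : H} {ℓ : ℕ → ℕ}
    (h : ∀ᵐ q ∂(volume.restrict (Ioo (0 : ℝ) 1)).prod (volume.restrict (Ioo (0 : ℝ) 1)),
      catf K g x q.1 = ℓ (catf K g x q.2)) :
    ∀ u ∈ Ioo (0 : ℝ) 1, catf K g x u = catf K g x (1 / 2) := by
  have : NeZero (volume.restrict (Ioo (0 : ℝ) 1)) := ⟨by simp [Measure.restrict_eq_zero]⟩
  obtain ⟨c, hc⟩ :=
    exists_ae_eq_const_of_ae_prod_eq (φ := catf K g x) (ψ := fun v => ℓ (catf K g x v)) h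
  have hIoo := Ioo_subset_of_ordConnected_of_ae (ordConnected_preimage_catf x c) hc
  intro u hu
  rw [hIoo hu, hIoo ⟨by norm_num, by norm_num⟩]

end catf

theorem lemma_x_ind_y_ii_general {Ω H : Type*} [MeasurableSpace Ω] [MeasurableSpace H]
    (P : Measure Ω) [IsProbabilityMeasure P] (K : ℕ) (hK : 2 ≤ K)
    (X : Ω → H) (Y : Ω → ℕ) (hX : Measurable X)
    (hYr : ∀ ω, Y ω ∈ Finset.Icc 1 K)
    (g : ℕ → H → ℝ) (hgm : ∀ k, Measurable (g k))
    (hg : ∀ k ∈ Finset.Icc 1 K, (fun ω => g k (X ω)) =ᵐ[P] condProb P X Y k)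
    (U U' : Ω → ℝ) (hU : Measurable U) (hU' : Measurable U')
    (hUdist : Measure.map U P = volume.restrict (Set.Ioo (0 : ℝ) 1))
    (hU'dist : Measure.map U' P = volume.restrict (Set.Ioo (0 : ℝ) 1))
    (hindep : IndepFun X (fun ω => (U ω, U' ω)) P)
    (hUU' : IndepFun U U' P)
    (hYf : Y =ᵐ[P] fun ω => catf K g (X ω) (U ω)) :
    (∃ h : H → ℕ, Measurable h ∧ (∀ x, h x ∈ Finset.Icc 1 K) ∧
        Y =ᵐ[P] fun ω => h (X ω)) ↔
      (∃ ℓ : ℕ → ℕ, Set.BijOn ℓ (Set.Icc 1 K) (Set.Icc 1 K) ∧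
        Y =ᵐ[P] fun ω => ℓ (catf K g (X ω) (U' ω))) := by
  have hcatf := measurable_uncurry_catf K hgm
  constructor
  · rintro ⟨h, hhm, -, hYh⟩
    have hgX : ∀ᵐ ω ∂P, ∀ k ∈ Finset.Icc 1 K, g k (X ω) = ind Y k ω :=
      (eventually_all_finset _).2 fun k hk =>
        (hg k hk).trans (condProb_ae_eq_ind_of_ae_eq_comp hX hhm hYh k)
    refine ⟨id, bijOn_id _, ?_⟩
    filter_upwards [hgX, ae_mem_of_map_eq_restrict hU' hU'dist measurableSet_Ioo]
      with ω hgω hU'ω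
    exact (catf_eq_of_eq_indicator (hYr ω) hgω hU'ω).symm
  · rintro ⟨ℓ, -, hYℓ⟩
    have hUU'dist : P.map (fun ω => (U ω, U' ω)) =
        (volume.restrict (Ioo (0 : ℝ) 1)).prod (volume.restrict (Ioo (0 : ℝ) 1)) := by
      rw [hUU'.map_prod_eq_prod_map_map hU.aemeasurable hU'.aemeasurable, hUdist, hU'dist]
    have hcoupling : ∀ᵐ z ∂(P.map X).prod (P.map fun ω => (U ω, U' ω)),
        catf K g z.1 z.2.1 = ℓ (catf K g z.1 z.2.2) :=
      hindep.ae_prod_of_ae hX (hU.prodMk hU') (measurableSet_eq_fun (by fun_prop) (by fun_prop))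
        (by filter_upwards [hYf, hYℓ] with ω hf hℓ using hf ▸ hℓ)
    rw [hUU'dist] at hcoupling
    have hconst : ∀ᵐ x ∂P.map X, ∀ u ∈ Ioo (0 : ℝ) 1, catf K g x u = catf K g x (1 / 2) :=
      (Measure.ae_ae_of_ae_prod hcoupling).mono fun x hx => catf_eqOn_of_ae_prod_eq hx
    -- `catf` is `0` where no `k` qualifies; `max 1` keeps `h` in `{1,…,K}` and equal to `Y` a.e.
    refine ⟨fun x => max 1 (catf K g x (1 / 2)), measurable_from_nat.comp (by fun_prop),
      fun x => Finset.mem_Icc.2 ⟨le_max_left _ _, max_le (by omega) (catf_le x _)⟩, ?_⟩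
    filter_upwards [hYf, ae_mem_of_map_eq_restrict hU hUdist measurableSet_Ioo,
      ae_of_ae_map hX.aemeasurable hconst] with ω hYω hUω hXω
    rw [← hXω _ hUω, ← hYω, max_eq_right (Finset.mem_Icc.1 (hYr ω)).1]

/-- Lemma 2 (ii): with `Y = f(X,U)` a.s. and `Y' = f(X,U')` for `X, U, U'` jointly
independent and `U, U'` uniform on `(0,1)`, there is a Borel measurable
`h : ℋ → {1,…,K}` with `Y = h(X)` a.s. if and only if there is a bijection `ℓ` of
`{1,…,K}` with `Y = ℓ(Y')` a.s.
(Joint independence of `X, U, U'` is encoded as `X ⟂ (U,U')` together with `U ⟂ U'`.) -/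
theorem lemma_x_ind_y_ii {Ω H : Type*} [MeasurableSpace Ω] [MetricSpace H]
    [MeasurableSpace H] [BorelSpace H] [TopologicalSpace.SeparableSpace H]
    (P : Measure Ω) [IsProbabilityMeasure P] (K : ℕ) (hK : 2 ≤ K)
    (X : Ω → H) (Y : Ω → ℕ) (hX : Measurable X) (hY : Measurable Y)
    (hYr : ∀ ω, Y ω ∈ Finset.Icc 1 K)
    (hp : ∀ k ∈ Finset.Icc 1 K, 0 < P {ω | Y ω = k})
    (g : ℕ → H → ℝ) (hgm : ∀ k, Measurable (g k))
    (hgr : ∀ k x, g k x ∈ Set.Icc (0 : ℝ) 1)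
    (hg : ∀ k ∈ Finset.Icc 1 K, (fun ω => g k (X ω)) =ᵐ[P] condProb P X Y k)
    (U U' : Ω → ℝ) (hU : Measurable U) (hU' : Measurable U')
    (hUdist : Measure.map U P = volume.restrict (Set.Ioo (0 : ℝ) 1))
    (hU'dist : Measure.map U' P = volume.restrict (Set.Ioo (0 : ℝ) 1))
    (hindep : IndepFun X (fun ω => (U ω, U' ω)) P)
    (hUU' : IndepFun U U' P)
    (hYf : Y =ᵐ[P] fun ω => catf K g (X ω) (U ω)) :
    (∃ h : H → ℕ, Measurable h ∧ (∀ x, h x ∈ Finset.Icc 1 K) ∧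
        Y =ᵐ[P] fun ω => h (X ω)) ↔
      (∃ ℓ : ℕ → ℕ, Set.BijOn ℓ (Set.Icc 1 K) (Set.Icc 1 K) ∧
        Y =ᵐ[P] fun ω => ℓ (catf K g (X ω) (U' ω))) :=
  lemma_x_ind_y_ii_general P K hK X Y hX hYr g hgm hg U U' hU hU' hUdist hU'dist hindep hUU' hYf
end
end

section
/- The dependence coefficient satisfies 0 ≤ ψ(X,Y) ≤ 1. Moreover, ψ is invariant under relabelling of the categories: for every bijection ℓ of {1,…,K}, ψ(X, ℓ∘Y) = ψ(X,Y), where ψ(X, ℓ∘Y) is defined with the level probabilities P(ℓ(Y)=k) and conditional probabilities P(ℓ(Y)=k ∣ X) of ℓ∘Y. -/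
open MeasureTheory ProbabilityTheory Filter Set

noncomputable section

/-- `p_k = P(Y = k)`. -/
def levelProb {Ω : Type*} [MeasurableSpace Ω] (P : Measure Ω) (Y : Ω → ℕ) (k : ℕ) : ℝ :=
  (P {ω | Y ω = k}).toReal

def cov {Ω : Type*} [MeasurableSpace Ω] (P : Measure Ω) (f g : Ω → ℝ) : ℝ :=
  ∫ ω, f ω * g ω ∂P - (∫ ω, f ω ∂P) * (∫ ω, g ω ∂P)

/-- The dependence coefficient
`ψ(X,Y) = (1/(K−1)) Σ_{k,l=1}^K Cov(Q_k(X), Q_l(X))² / (p_k p_l)`. -/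
def psi {Ω H : Type*} [MeasurableSpace Ω] [MeasurableSpace H]
    (P : Measure Ω) (X : Ω → H) (Y : Ω → ℕ) (K : ℕ) : ℝ :=
  (1 / ((K : ℝ) - 1)) * ∑ k ∈ Finset.Icc 1 K, ∑ l ∈ Finset.Icc 1 K,
    (cov P (condProb P X Y k) (condProb P X Y l)) ^ 2 / (levelProb P Y k * levelProb P Y l)

section

variable {Ω : Type*} {m m0 : MeasurableSpace Ω} {P : Measure Ω} {Y : Ω → ℕ} {s : Finset ℕ}

theorem sq_setIntegral_le_measureReal_mul [IsFiniteMeasure P] {f : Ω → ℝ} (hf : MemLp f 2 P)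
    (A : Set Ω) : (∫ ω in A, f ω ∂P) ^ 2 ≤ P.real A * ∫ ω in A, f ω ^ 2 ∂P := by
  have hf1 : IntegrableOn f A P := (hf.integrable one_le_two).integrableOn
  have hf2 : IntegrableOn (fun ω => f ω ^ 2) A P := hf.integrable_sq.integrableOn
  have hquad : ∀ c : ℝ,
      0 ≤ P.real A * (c * c) + (-2 * ∫ ω in A, f ω ∂P) * c + ∫ ω in A, f ω ^ 2 ∂P := by
    intro c
    have hlin : IntegrableOn (fun ω => f ω ^ 2 - 2 * c * f ω) A P := hf2.sub (hf1.const_mul _)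
    calc 0 ≤ ∫ ω in A, (f ω - c) ^ 2 ∂P := integral_nonneg fun ω => sq_nonneg _
      _ = ∫ ω in A, (f ω ^ 2 - 2 * c * f ω) + c ^ 2 ∂P := by congr 1 with ω; ring
      _ = _ := by
        rw [integral_add hlin integrableOn_const, integral_sub hf2 (hf1.const_mul _),
          integral_const_mul, setIntegral_const, smul_eq_mul]
        ring
  have := discrim_le_zero hquad
  rw [discrim] at this
  linarith

theorem integral_condExp_mul_condExp [IsFiniteMeasure P] (hm : m ≤ m0) {f g : Ω → ℝ} {R : ℝ}
    (hf : ∀ᵐ ω ∂P, |f ω| ≤ R) (hg : Integrable g P) :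
    ∫ ω, (P[f|m]) ω * (P[g|m]) ω ∂P = ∫ ω, (P[f|m]) ω * g ω ∂P :=
  calc ∫ ω, (P[f|m]) ω * (P[g|m]) ω ∂P = ∫ ω, (P[P[f|m] * g|m]) ω ∂P :=
        integral_congr_ae (condExp_stronglyMeasurable_mul_of_bound hm stronglyMeasurable_condExp hg
          R (ae_bdd_abs_condExp_of_ae_bdd_abs hf)).symm
    _ = ∫ ω, (P[f|m]) ω * g ω ∂P := integral_condExp hm

theorem cov_condExp_condExp_indicator [IsFiniteMeasure P] (hm : m ≤ m0) {f : Ω → ℝ} {R : ℝ}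
    (hf : ∀ᵐ ω ∂P, |f ω| ≤ R) {A : Set Ω} (hA : MeasurableSet A) :
    cov P (P[f|m]) (P[A.indicator 1|m]) = ∫ ω in A, ((P[f|m]) ω - ∫ ω, f ω ∂P) ∂P := by
  have hmul : ∫ ω, (P[f|m]) ω * A.indicator 1 ω ∂P = ∫ ω in A, (P[f|m]) ω ∂P := by
    simp_rw [← Set.indicator_mul_right, Pi.one_apply, mul_one, integral_indicator hA]
  rw [cov, integral_condExp_mul_condExp (g := A.indicator 1) hm hf
      ((integrable_const 1).indicator hA), hmul, integral_condExp hm, integral_condExp hm,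
    integral_indicator_one hA, integral_sub integrable_condExp.integrableOn (integrable_const _),
    setIntegral_const, smul_eq_mul]
  ring

theorem cov_self_eq_integral_sq [IsProbabilityMeasure P] {f : Ω → ℝ} (hf : MemLp f 2 P) :
    cov P f f = ∫ ω, (f ω - ∫ ω, f ω ∂P) ^ 2 ∂P := by
  have h := covariance_eq_sub hf hf
  simp only [covariance, Pi.mul_apply] at h
  simp only [cov, sq, h]

theorem ind_eq_indicator (Y : Ω → ℕ) (k : ℕ) : ind Y k = {ω | Y ω = k}.indicator 1 := by
  ext ω
  simp [ind, Set.indicator_apply]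

theorem abs_ind_le_one (Y : Ω → ℕ) (k : ℕ) (ω : Ω) : |ind Y k ω| ≤ 1 := by
  unfold ind
  split_ifs <;> norm_num

theorem sum_setIntegral_fiber_eq_integral (hY : Measurable Y) (hYs : ∀ ω, Y ω ∈ s) {g : Ω → ℝ}
    (hg : Integrable g P) : ∑ k ∈ s, ∫ ω in {ω | Y ω = k}, g ω ∂P = ∫ ω, g ω ∂P := by
  have hcover : ⋃ k ∈ s, {ω | Y ω = k} = univ :=
    eq_univ_of_forall fun ω => mem_biUnion (hYs ω) rfl
  rw [← integral_biUnion_finset s (s := fun k => {ω | Y ω = k})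
      (fun _ _ => measurableSet_eq_fun hY measurable_const)
      (fun k _ l _ hkl => disjoint_left.2 fun ω hk hl => hkl (hk.symm.trans hl))
      (fun _ _ => hg.integrableOn), hcover, setIntegral_univ]

theorem sum_levelProb [IsProbabilityMeasure P] (hY : Measurable Y) (hYs : ∀ ω, Y ω ∈ s) :
    ∑ k ∈ s, levelProb P Y k = 1 := by
  simpa [setIntegral_const, levelProb, measureReal_def] using
    sum_setIntegral_fiber_eq_integral (P := P) hY hYs (integrable_const (1 : ℝ))

theorem integral_ind (hY : Measurable Y) (k : ℕ) : ∫ ω, ind Y k ω ∂P = levelProb P Y k := by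
  rw [ind_eq_indicator, integral_indicator_one (measurableSet_eq_fun hY measurable_const),
    levelProb, measureReal_def]

theorem cov_condExp_ind_eq_setIntegral [IsFiniteMeasure P] (hm : m ≤ m0) (hY : Measurable Y)
    (j l : ℕ) : cov P (P[ind Y j|m]) (P[ind Y l|m])
      = ∫ ω in {ω | Y ω = l}, ((P[ind Y j|m]) ω - levelProb P Y j) ∂P := by
  rw [ind_eq_indicator Y l, cov_condExp_condExp_indicator hm
    (ae_of_all _ (abs_ind_le_one Y j)) (measurableSet_eq_fun hY measurable_const), integral_ind hY]

theorem condExp_ind_le_one (k : ℕ) : ∀ᵐ ω ∂P, (P[ind Y k|m]) ω ≤ 1 := by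
  filter_upwards [ae_bdd_abs_condExp_of_ae_bdd_abs (m := m) (ae_of_all P (abs_ind_le_one Y k))]
    with ω hω using (abs_le.1 hω).2

theorem memLp_condExp_ind [IsFiniteMeasure P] (hm : m ≤ m0) (k : ℕ) (p : ENNReal) :
    MemLp (P[ind Y k|m]) p P :=
  MemLp.of_bound (stronglyMeasurable_condExp.mono hm).aestronglyMeasurable 1
    (by simpa [Real.norm_eq_abs] using
      ae_bdd_abs_condExp_of_ae_bdd_abs (m := m) (ae_of_all P (abs_ind_le_one Y k)))

theorem sum_sq_cov_condExp_ind_div_le [IsProbabilityMeasure P] (hm : m ≤ m0) (hY : Measurable Y)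
    (hYs : ∀ ω, Y ω ∈ s) (j : ℕ) :
    ∑ l ∈ s, cov P (P[ind Y j|m]) (P[ind Y l|m]) ^ 2 / levelProb P Y l
      ≤ levelProb P Y j * (1 - levelProb P Y j) := by
  set p := levelProb P Y j
  set Z : Ω → ℝ := fun ω => (P[ind Y j|m]) ω - p
  have hZ : MemLp Z 2 P := (memLp_condExp_ind hm j 2).sub (memLp_const p)
  have hZint : ∫ ω, (P[ind Y j|m]) ω ∂P = p := (integral_condExp hm).trans (integral_ind hY j)
  calc ∑ l ∈ s, cov P (P[ind Y j|m]) (P[ind Y l|m]) ^ 2 / levelProb P Y l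
      = ∑ l ∈ s, (∫ ω in {ω | Y ω = l}, Z ω ∂P) ^ 2 / P.real {ω | Y ω = l} := by
        simp only [cov_condExp_ind_eq_setIntegral hm hY, levelProb, measureReal_def, Z, p]
    _ ≤ ∑ l ∈ s, ∫ ω in {ω | Y ω = l}, Z ω ^ 2 ∂P := by
        gcongr with l
        exact div_le_of_le_mul₀ measureReal_nonneg (integral_nonneg fun ω => sq_nonneg _)
          (by rw [mul_comm]; exact sq_setIntegral_le_measureReal_mul hZ _)
    _ = ∫ ω, Z ω ^ 2 ∂P := sum_setIntegral_fiber_eq_integral hY hYs hZ.integrable_sq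
    _ = cov P (P[ind Y j|m]) (P[ind Y j|m]) := by
        rw [cov_self_eq_integral_sq (memLp_condExp_ind hm j 2), hZint]
    _ = ∫ ω in {ω | Y ω = j}, Z ω ∂P := cov_condExp_ind_eq_setIntegral hm hY j j
    _ ≤ ∫ ω in {ω | Y ω = j}, (1 - p) ∂P := by
        refine setIntegral_mono_ae_restrict (hZ.integrable one_le_two).integrableOn
          integrableOn_const ?_
        filter_upwards [ae_restrict_of_ae (condExp_ind_le_one (m := m) j)] with ω hω
        exact sub_le_sub_right hω p
    _ = p * (1 - p) := by
        rw [setIntegral_const, smul_eq_mul]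
        rfl

theorem sum_sum_sq_cov_condExp_ind_div_le [IsProbabilityMeasure P] (hm : m ≤ m0)
    (hY : Measurable Y) (hYs : ∀ ω, Y ω ∈ s) :
    ∑ k ∈ s, ∑ l ∈ s,
        cov P (P[ind Y k|m]) (P[ind Y l|m]) ^ 2 / (levelProb P Y k * levelProb P Y l)
      ≤ s.card - 1 := by
  calc _ = ∑ k ∈ s, (∑ l ∈ s, cov P (P[ind Y k|m]) (P[ind Y l|m]) ^ 2 / levelProb P Y l)
          / levelProb P Y k := by
        simp_rw [Finset.sum_div, div_div, mul_comm]
    _ ≤ ∑ k ∈ s, (1 - levelProb P Y k) := by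
        gcongr with k
        exact div_le_of_le_mul₀ ENNReal.toReal_nonneg
          (sub_nonneg.2 (measureReal_le_one (μ := P)))
          ((sum_sq_cov_condExp_ind_div_le hm hY hYs k).trans_eq (mul_comm _ _))
    _ = s.card - 1 := by
        rw [Finset.sum_sub_distrib, sum_levelProb hY hYs, Finset.sum_const, nsmul_one]

end

section

variable {Ω H : Type*} [MeasurableSpace Ω] [MeasurableSpace H] {P : Measure Ω} {X : Ω → H}
  {Y : Ω → ℕ} {K : ℕ}

theorem psi_mem_Icc [IsProbabilityMeasure P] (hX : Measurable X) (hY : Measurable Y)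
    (hYK : ∀ ω, Y ω ∈ Finset.Icc 1 K) :
    psi P X Y K ∈ Icc 0 1 := by
  have hS := sum_sum_sq_cov_condExp_ind_div_le (P := P) hX.comap_le hY hYK
  have hS0 : 0 ≤ ∑ k ∈ Finset.Icc 1 K, ∑ l ∈ Finset.Icc 1 K,
      cov P (condProb P X Y k) (condProb P X Y l) ^ 2 / (levelProb P Y k * levelProb P Y l) :=
    Finset.sum_nonneg fun k _ => Finset.sum_nonneg fun l _ =>
      div_nonneg (sq_nonneg _) (mul_nonneg ENNReal.toReal_nonneg ENNReal.toReal_nonneg)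
  rw [Nat.card_Icc, Nat.add_sub_cancel] at hS
  rw [psi, one_div_mul_eq_div]
  exact ⟨div_nonneg hS0 (hS0.trans hS), div_le_one_of_le₀ hS (hS0.trans hS)⟩

theorem psi_comp_of_bijOn {ℓ : ℕ → ℕ} (hYK : ∀ ω, Y ω ∈ Finset.Icc 1 K)
    (hℓ : BijOn ℓ (Icc 1 K) (Icc 1 K)) :
    psi P X (fun ω => ℓ (Y ω)) K = psi P X Y K := by
  have hrelabel : ∀ k ∈ Finset.Icc 1 K, ∀ ω, ℓ (Y ω) = ℓ k ↔ Y ω = k := fun k hk ω =>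
    hℓ.injOn.eq_iff (by simpa using hYK ω) (by simpa using hk)
  have hsum : ∀ F G : ℕ → ℝ, (∀ k ∈ Finset.Icc 1 K, F k = G (ℓ k)) →
      ∑ k ∈ Finset.Icc 1 K, F k = ∑ k ∈ Finset.Icc 1 K, G k := fun F G hFG =>
    Finset.sum_nbij ℓ (fun k hk => by simpa using hℓ.mapsTo (by simpa using hk))
      (by simpa using hℓ.injOn) (by simpa using hℓ.surjOn) hFG
  have hind : ∀ k ∈ Finset.Icc 1 K, ind (fun ω => ℓ (Y ω)) (ℓ k) = ind Y k := fun k hk =>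
    funext fun ω => by simp only [ind, hrelabel k hk]
  unfold psi
  congr 1
  refine (hsum _ _ fun k hk => hsum _ _ fun l hl => ?_).symm
  simp only [condProb, levelProb, hind k hk, hind l hl, hrelabel k hk, hrelabel l hl]

end

theorem psi_range_and_perm_invariant_general {Ω H : Type*} [MeasurableSpace Ω]
    [MeasurableSpace H]
    (P : Measure Ω) [IsProbabilityMeasure P] (K : ℕ)
    (X : Ω → H) (Y : Ω → ℕ) (hX : Measurable X) (hY : Measurable Y)
    (hYr : ∀ ω, Y ω ∈ Finset.Icc 1 K) :
    0 ≤ psi P X Y K ∧ psi P X Y K ≤ 1 ∧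
      ∀ ℓ : ℕ → ℕ, Set.BijOn ℓ (Set.Icc 1 K) (Set.Icc 1 K) →
        psi P X (fun ω => ℓ (Y ω)) K = psi P X Y K :=
  ⟨(psi_mem_Icc hX hY hYr).1, (psi_mem_Icc hX hY hYr).2, fun _ hℓ => psi_comp_of_bijOn hYr hℓ⟩

/-- Theorem 1, part (M1) and permutation invariance: `0 ≤ ψ(X,Y) ≤ 1`, and `ψ` is
invariant under bijective relabellings of the categories `{1,…,K}`. -/
theorem psi_range_and_perm_invariant {Ω H : Type*} [MeasurableSpace Ω] [MetricSpace H]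
    [MeasurableSpace H] [BorelSpace H] [TopologicalSpace.SeparableSpace H]
    (P : Measure Ω) [IsProbabilityMeasure P] (K : ℕ) (hK : 2 ≤ K)
    (X : Ω → H) (Y : Ω → ℕ) (hX : Measurable X) (hY : Measurable Y)
    (hYr : ∀ ω, Y ω ∈ Finset.Icc 1 K)
    (hp : ∀ k ∈ Finset.Icc 1 K, 0 < P {ω | Y ω = k}) :
    0 ≤ psi P X Y K ∧ psi P X Y K ≤ 1 ∧
      ∀ ℓ : ℕ → ℕ, Set.BijOn ℓ (Set.Icc 1 K) (Set.Icc 1 K) →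
        psi P X (fun ω => ℓ (Y ω)) K = psi P X Y K :=
  psi_range_and_perm_invariant_general P K X Y hX hY hYr
end
end

section
/- The information gain inequality holds: ψ(X,Y) ≤ ψ((X,Z),Y). -/
open MeasureTheory ProbabilityTheory Filter Set

noncomputable section

/-! Write `q k = P[1{Y=k} | X]` and `Q k = P[1{Y=k} | X, Z]`. Since `σ(X) ≤ σ(X, Z)`, the
increments `Q k - q k` are orthogonal to `L²(σ(X))`, so
`Cov(Q k, Q l) = Cov(q k, q l) + E[(Q k - q k) (Q l - q l)]`. Expanding the squares, the difference
of the two double sums defining `ψ` is a sum of entrywise products of Gram matrices, which is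
nonnegative by Schur's product theorem. -/

open Finset
open scoped ENNReal

section Gram

variable {α β ι : Type*} [MeasurableSpace α] [MeasurableSpace β] {μ : Measure α} {ν : Measure β}
  [SFinite μ] [SFinite ν]

/-- The sum is the integral of `(∑ k, u k x * v k y) ^ 2` over `μ.prod ν`: this is Schur's
product theorem for the two Gram matrices `(∫ u k * u l)` and `(∫ v k * v l)`. -/
lemma sum_integral_mul_mul_integral_mul_nonneg (s : Finset ι) (u : ι → α → ℝ) (v : ι → β → ℝ)
    (hu : ∀ k l, Integrable (fun x => u k x * u l x) μ)
    (hv : ∀ k l, Integrable (fun y => v k y * v l y) ν) :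
    0 ≤ ∑ k ∈ s, ∑ l ∈ s, (∫ x, u k x * u l x ∂μ) * ∫ y, v k y * v l y ∂ν := by
  have hint : ∀ kl ∈ s ×ˢ s, Integrable
      (fun z : α × β => u kl.1 z.1 * v kl.1 z.2 * (u kl.2 z.1 * v kl.2 z.2)) (μ.prod ν) :=
    fun kl _ => ((hu kl.1 kl.2).mul_prod (hv kl.1 kl.2)).congr
      (.of_forall fun z => by ring)
  calc (0 : ℝ) ≤ ∫ z, (∑ k ∈ s, u k z.1 * v k z.2) ^ 2 ∂μ.prod ν :=
        integral_nonneg fun z => sq_nonneg _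
    _ = ∑ kl ∈ s ×ˢ s, ∫ z, u kl.1 z.1 * v kl.1 z.2 * (u kl.2 z.1 * v kl.2 z.2) ∂μ.prod ν := by
        simp_rw [← integral_finsetSum _ hint, sq, sum_mul_sum, sum_product]
    _ = _ := by
        rw [sum_product]
        refine sum_congr rfl fun k _ => sum_congr rfl fun l _ => ?_
        rw [← integral_prod_mul]
        congr 1 with z
        ring

end Gram

section CondExp

variable {Ω ι : Type*} {m m₁ m₂ m0 : MeasurableSpace Ω} {μ : Measure Ω}

lemma integral_mul_condExp_of_stronglyMeasurable [IsFiniteMeasure μ] (hm : m ≤ m0)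
    {f g : Ω → ℝ} (hf : StronglyMeasurable[m] f) (hfg : Integrable (f * g) μ)
    (hg : Integrable g μ) :
    ∫ ω, f ω * μ[g | m] ω ∂μ = ∫ ω, f ω * g ω ∂μ :=
  calc ∫ ω, f ω * μ[g | m] ω ∂μ = ∫ ω, μ[f * g | m] ω ∂μ :=
        integral_congr_ae (condExp_mul_of_stronglyMeasurable_left hf hfg hg).symm
    _ = ∫ ω, f ω * g ω ∂μ := integral_condExp hm

lemma integral_condExp_mul_condExp_of_le [IsFiniteMeasure μ] (h₁₂ : m₁ ≤ m₂) (h₂ : m₂ ≤ m0)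
    {f g : Ω → ℝ} (hf : MemLp f 2 μ) (hg : MemLp g 2 μ) :
    ∫ ω, μ[f | m₁] ω * μ[g | m₂] ω ∂μ = ∫ ω, μ[f | m₁] ω * μ[g | m₁] ω ∂μ := by
  have hf₁ : MemLp (μ[f | m₁]) 2 μ := hf.condExp one_le_two
  rw [integral_mul_condExp_of_stronglyMeasurable h₂ (stronglyMeasurable_condExp.mono h₁₂)
      (hf₁.integrable_mul hg) (hg.integrable one_le_two),
    integral_mul_condExp_of_stronglyMeasurable (h₁₂.trans h₂) stronglyMeasurable_condExp
      (hf₁.integrable_mul hg) (hg.integrable one_le_two)]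

lemma cov_eq_covariance [IsProbabilityMeasure μ] {f g : Ω → ℝ} (hf : MemLp f 2 μ)
    (hg : MemLp g 2 μ) : cov μ f g = covariance f g μ := by
  rw [covariance_eq_sub hf hg]
  rfl

lemma cov_condExp_eq_cov_condExp_add_of_le [IsFiniteMeasure μ] (h₁₂ : m₁ ≤ m₂) (h₂ : m₂ ≤ m0)
    {f g : Ω → ℝ} (hf : MemLp f 2 μ) (hg : MemLp g 2 μ) :
    cov μ (μ[f | m₂]) (μ[g | m₂]) = cov μ (μ[f | m₁]) (μ[g | m₁])
      + ∫ ω, (μ[f | m₂] ω - μ[f | m₁] ω) * (μ[g | m₂] ω - μ[g | m₁] ω) ∂μ := by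
  have hf₁ := hf.condExp (m := m₁) one_le_two
  have hf₂ := hf.condExp (m := m₂) one_le_two
  have hg₁ := hg.condExp (m := m₁) one_le_two
  have hg₂ := hg.condExp (m := m₂) one_le_two
  have h_incr : ∫ ω, (μ[f | m₂] ω - μ[f | m₁] ω) * (μ[g | m₂] ω - μ[g | m₁] ω) ∂μ
      = ∫ ω, μ[f | m₂] ω * μ[g | m₂] ω ∂μ - ∫ ω, μ[f | m₁] ω * μ[g | m₂] ω ∂μ
        - (∫ ω, μ[g | m₁] ω * μ[f | m₂] ω ∂μ - ∫ ω, μ[f | m₁] ω * μ[g | m₁] ω ∂μ) := by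
    have hi {a b : Ω → ℝ} (ha : MemLp a 2 μ) (hb : MemLp b 2 μ) :
        Integrable (fun ω => a ω * b ω) μ := ha.integrable_mul hb
    have h_expand : (fun ω => (μ[f | m₂] ω - μ[f | m₁] ω) * (μ[g | m₂] ω - μ[g | m₁] ω))
        = fun ω => (μ[f | m₂] ω * μ[g | m₂] ω - μ[f | m₁] ω * μ[g | m₂] ω)
          - (μ[g | m₁] ω * μ[f | m₂] ω - μ[f | m₁] ω * μ[g | m₁] ω) := by
      ext ω
      ring
    have hA : Integrable (fun ω => μ[f | m₂] ω * μ[g | m₂] ω - μ[f | m₁] ω * μ[g | m₂] ω) μ :=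
      (hi hf₂ hg₂).sub (hi hf₁ hg₂)
    have hB : Integrable (fun ω => μ[g | m₁] ω * μ[f | m₂] ω - μ[f | m₁] ω * μ[g | m₁] ω) μ :=
      (hi hg₁ hf₂).sub (hi hf₁ hg₁)
    rw [h_expand, integral_sub hA hB,
      integral_sub (hi hf₂ hg₂) (hi hf₁ hg₂), integral_sub (hi hg₁ hf₂) (hi hf₁ hg₁)]
  have h_swap : ∫ ω, μ[g | m₁] ω * μ[f | m₁] ω ∂μ = ∫ ω, μ[f | m₁] ω * μ[g | m₁] ω ∂μ := by
    simp_rw [mul_comm]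
  rw [h_incr, integral_condExp_mul_condExp_of_le h₁₂ h₂ hf hg,
    integral_condExp_mul_condExp_of_le h₁₂ h₂ hg hf, h_swap, cov, cov,
    integral_condExp h₂, integral_condExp h₂, integral_condExp (h₁₂.trans h₂),
    integral_condExp (h₁₂.trans h₂)]
  ring

lemma sum_sq_cov_condExp_mul_le_of_le [IsProbabilityMeasure μ] (h₁₂ : m₁ ≤ m₂) (h₂ : m₂ ≤ m0)
    (s : Finset ι) {f : ι → Ω → ℝ} (hf : ∀ k, MemLp (f k) 2 μ) (w : ι → ℝ) :
    ∑ k ∈ s, ∑ l ∈ s, cov μ (μ[f k | m₁]) (μ[f l | m₁]) ^ 2 * (w k * w l)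
      ≤ ∑ k ∈ s, ∑ l ∈ s, cov μ (μ[f k | m₂]) (μ[f l | m₂]) ^ 2 * (w k * w l) := by
  set q : ι → Ω → ℝ := fun k => μ[f k | m₁]
  set v : ι → Ω → ℝ := fun k ω => μ[f k | m₂] ω - q k ω
  set u : ι → Ω → ℝ := fun k ω => w k * (q k ω - μ[q k])
  set wv : ι → Ω → ℝ := fun k ω => w k * v k ω
  have hq (k : ι) : MemLp (q k) 2 μ := (hf k).condExp one_le_two
  have hv (k : ι) : MemLp (v k) 2 μ := ((hf k).condExp one_le_two).sub (hq k)
  have hu (k : ι) : MemLp (u k) 2 μ := ((hq k).sub (memLp_const _)).const_mul (w k)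
  have hwv (k : ι) : MemLp (wv k) 2 μ := (hv k).const_mul (w k)
  have hcov (k l : ι) : cov μ (q k) (q l) * (w k * w l) = ∫ ω, u k ω * u l ω ∂μ := by
    rw [cov_eq_covariance (hq k) (hq l), covariance, ← integral_mul_const]
    congr 1 with ω
    ring
  have hincr (k l : ι) : (∫ ω, v k ω * v l ω ∂μ) * (w k * w l) = ∫ ω, wv k ω * wv l ω ∂μ := by
    rw [← integral_mul_const]
    congr 1 with ω
    ring
  have hsplit (k l : ι) : cov μ (μ[f k | m₂]) (μ[f l | m₂]) ^ 2 * (w k * w l)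
      = cov μ (q k) (q l) ^ 2 * (w k * w l)
        + (2 * ((∫ ω, u k ω * u l ω ∂μ) * ∫ ω, v k ω * v l ω ∂μ)
          + (∫ ω, wv k ω * wv l ω ∂μ) * ∫ ω, v k ω * v l ω ∂μ) := by
    rw [cov_condExp_eq_cov_condExp_add_of_le h₁₂ h₂ (hf k) (hf l), ← hcov, ← hincr]
    ring
  simp only [hsplit, sum_add_distrib, ← mul_sum]
  have hi {a : ι → Ω → ℝ} (ha : ∀ k, MemLp (a k) 2 μ) (k l : ι) :
      Integrable (fun ω => a k ω * a l ω) μ := (ha k).integrable_mul (ha l)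
  have h_cross := sum_integral_mul_mul_integral_mul_nonneg s u v (hi hu) (hi hv)
  have h_incr := sum_integral_mul_mul_integral_mul_nonneg s wv v (hi hwv) (hi hv)
  linarith

end CondExp

lemma memLp_ind {Ω : Type*} [MeasurableSpace Ω] {μ : Measure Ω} [IsFiniteMeasure μ]
    {Y : Ω → ℕ} (hY : Measurable Y) (k : ℕ) (p : ℝ≥0∞) : MemLp (ind Y k) p μ := by
  have h_ind : ind Y k = {ω | Y ω = k}.indicator fun _ => 1 := by
    ext ω
    simp [ind, Set.indicator]
  rw [h_ind]
  exact memLp_indicator_const p (hY (measurableSet_singleton k)) 1 (.inr (measure_ne_top _ _))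

theorem psi_information_gain_general {Ω H H' : Type*} [MeasurableSpace Ω]
    [MeasurableSpace H] [MeasurableSpace H']
    (P : Measure Ω) [IsProbabilityMeasure P] (K : ℕ) (hK : 2 ≤ K)
    (X : Ω → H) (Z : Ω → H') (Y : Ω → ℕ)
    (hX : Measurable X) (hZ : Measurable Z) (hY : Measurable Y) :
    psi P X Y K ≤ psi P (fun ω => (X ω, Z ω)) Y K := by
  have h_le : MeasurableSpace.comap X inferInstance
      ≤ MeasurableSpace.comap (fun ω => (X ω, Z ω)) inferInstance :=
    (measurable_fst.comp (comap_measurable (fun ω => (X ω, Z ω)))).comap_le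
  have h_norm : 0 ≤ 1 / ((K : ℝ) - 1) := by
    have : (2 : ℝ) ≤ K := by exact_mod_cast hK
    exact one_div_nonneg.mpr (by linarith)
  simp only [psi, condProb, div_eq_mul_inv (_ ^ 2), mul_inv]
  exact mul_le_mul_of_nonneg_left (sum_sq_cov_condExp_mul_le_of_le h_le
    (hX.prodMk hZ).comap_le _ (fun k => memLp_ind hY k 2) _) h_norm

/-- Theorem 4, part (M4) (information gain inequality): `ψ(X,Y) ≤ ψ((X,Z),Y)`. -/
theorem psi_information_gain {Ω H H' : Type*} [MeasurableSpace Ω] [MetricSpace H]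
    [MeasurableSpace H] [BorelSpace H] [TopologicalSpace.SeparableSpace H]
    [MetricSpace H'] [MeasurableSpace H'] [BorelSpace H'] [TopologicalSpace.SeparableSpace H']
    (P : Measure Ω) [IsProbabilityMeasure P] (K : ℕ) (hK : 2 ≤ K)
    (X : Ω → H) (Z : Ω → H') (Y : Ω → ℕ)
    (hX : Measurable X) (hZ : Measurable Z) (hY : Measurable Y)
    (hYr : ∀ ω, Y ω ∈ Finset.Icc 1 K)
    (hp : ∀ k ∈ Finset.Icc 1 K, 0 < P {ω | Y ω = k}) :
    psi P X Y K ≤ psi P (fun ω => (X ω, Z ω)) Y K :=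
  psi_information_gain_general P K hK X Z Y hX hZ hY
end
end

section
/- Let X_1, X_2, … be i.i.d. Borel measurable random elements of a separable metric space (ℋ, d), with almost surely unique nearest neighbours in every sample {X_1,…,X_n}. Then, as n → ∞: (i) d(X_{N(1)}, X_1) → 0 almost surely; (ii) P(N(1) = N(2)) → 0. -/
/-!
Almost surely every sample point `X i` is a cluster point of the whole sequence `(X j)`: it lies
in the support of the common law, which is conull in a second countable space, and by the second
Borel–Cantelli lemma each of the countably many basic open sets of positive probability is hit
infinitely often. Hence the nearest-neighbour distance of `X i` tends to `0`. If `X 0 ≠ X 1`,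
a common nearest neighbour would eventually lie within `dist (X 0) (X 1) / 2` of both, which is
impossible; if `X 0 = X 1`, they are each other's unique nearest neighbours. So almost surely
`N n 0 ≠ N n 1` eventually, and dominated convergence turns this into (ii); the events
`{N n 0 = N n 1}` are null-measurable because a.s. `N n i` is the strict minimizer of finitely
many measurable distances.
-/

open MeasureTheory ProbabilityTheory Filter Set

noncomputable section

/-- `ω`-wise property characterizing a nearest-neighbour assignment `N`: for each sample
size `n ≥ 2` and each `i < n`, `N n i ω` is the index `j < n`, `j ≠ i`, uniquely (strictly)
minimizing `dist (X i ω) (X j ω)` over `j ≠ i`. -/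
def IsNNFun {Ω H : Type*} [MetricSpace H] (X : ℕ → Ω → H) (N : ℕ → ℕ → Ω → ℕ) (ω : Ω) : Prop :=
  ∀ n, 2 ≤ n → ∀ i < n, N n i ω < n ∧ N n i ω ≠ i ∧
    ∀ j < n, j ≠ i → j ≠ N n i ω → dist (X i ω) (X (N n i ω) ω) < dist (X i ω) (X j ω)

open Topology

namespace IsNNFun

variable {Ω H : Type*} [MetricSpace H] {X : ℕ → Ω → H} {N : ℕ → ℕ → Ω → ℕ} {ω : Ω} {n i : ℕ}

lemma dist_le (h : IsNNFun X N ω) (hn : 2 ≤ n) (hi : i < n) {j : ℕ} (hj : j < n) (hji : j ≠ i) :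
    dist (X i ω) (X (N n i ω) ω) ≤ dist (X i ω) (X j ω) := by
  obtain ⟨-, -, hmin⟩ := h n hn i hi
  rcases eq_or_ne j (N n i ω) with rfl | hjN
  · rfl
  · exact (hmin j hj hji hjN).le

lemma eq_iff (h : IsNNFun X N ω) (hn : 2 ≤ n) (hi : i < n) (j : ℕ) :
    N n i ω = j ↔ j < n ∧ j ≠ i ∧
      ∀ k < n, k ≠ i → k ≠ j → dist (X i ω) (X j ω) < dist (X i ω) (X k ω) := by
  obtain ⟨hlt, hne, hmin⟩ := h n hn i hi
  refine ⟨fun hj => hj ▸ ⟨hlt, hne, hmin⟩, fun ⟨hj, hji, hjmin⟩ => ?_⟩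
  by_contra hNj
  exact lt_asymm (hmin j hj hji (Ne.symm hNj)) (hjmin _ hlt hne hNj)

lemma tendsto_dist (h : IsNNFun X N ω) (hi : MapClusterPt (X i ω) atTop fun j => X j ω) :
    Tendsto (fun n => dist (X (N n i ω) ω) (X i ω)) atTop (𝓝 0) := by
  refine tendsto_order.2
    ⟨fun a ha => .of_forall fun n => ha.trans_le dist_nonneg, fun ε hε => ?_⟩
  obtain ⟨j, hjε, hij⟩ := ((mapClusterPt_iff_frequently.1 hi _
    (Metric.ball_mem_nhds _ hε)).and_eventually (eventually_gt_atTop i)).exists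
  filter_upwards [eventually_gt_atTop j] with n hjn
  calc dist (X (N n i ω) ω) (X i ω) = dist (X i ω) (X (N n i ω) ω) := dist_comm _ _
    _ ≤ dist (X i ω) (X j ω) := h.dist_le (by omega) (by omega) hjn hij.ne'
    _ < ε := by rwa [dist_comm]

lemma eventually_ne (h : IsNNFun X N ω) {i i' : ℕ} (hii' : i ≠ i')
    (hi : MapClusterPt (X i ω) atTop fun j => X j ω)
    (hi' : MapClusterPt (X i' ω) atTop fun j => X j ω) :
    ∀ᶠ n in atTop, N n i ω ≠ N n i' ω := by
  by_cases hX : X i ω = X i' ω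
  · filter_upwards [eventually_gt_atTop (max i i')] with n hn
    have hn2 : 2 ≤ n := by omega
    -- `X i'` is at distance `0` from `X i`, so no other point can be strictly closer
    have hNi : N n i ω = i' := by
      by_contra hNi
      have := (h n hn2 i (by omega)).2.2 i' (by omega) hii'.symm (Ne.symm hNi)
      rw [hX, dist_self] at this
      exact dist_nonneg.not_gt this
    rw [hNi]
    exact (h n hn2 i' (by omega)).2.1.symm
  · have hδ : 0 < dist (X i ω) (X i' ω) / 2 := half_pos (dist_pos.2 hX)
    filter_upwards [(tendsto_order.1 (h.tendsto_dist hi)).2 _ hδ,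
      (tendsto_order.1 (h.tendsto_dist hi')).2 _ hδ] with n hn hn' hNN
    rw [hNN] at hn
    linarith [dist_triangle_left (X i ω) (X i' ω) (X (N n i' ω) ω)]

end IsNNFun

section NullMeasurable

variable {Ω H : Type*} [MeasurableSpace Ω] [MetricSpace H] [MeasurableSpace H]
  [OpensMeasurableSpace H] [SecondCountableTopology H] {P : Measure Ω} {X : ℕ → Ω → H}
  {N : ℕ → ℕ → Ω → ℕ} {n i : ℕ}

lemma nullMeasurableSet_setOf_eq_of_ae_isNNFun (hX : ∀ i, Measurable (X i))
    (hN : ∀ᵐ ω ∂P, IsNNFun X N ω) (hn : 2 ≤ n) (hi : i < n) (j : ℕ) :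
    NullMeasurableSet {ω | N n i ω = j} P := by
  have hmeas : MeasurableSet {ω | j < n ∧ j ≠ i ∧
      ∀ k < n, k ≠ i → k ≠ j → dist (X i ω) (X j ω) < dist (X i ω) (X k ω)} := by
    refine measurableSet_setOfPred.2 (measurable_const.and (measurable_const.and ?_))
    refine Measurable.forall fun k => measurable_const.imp <| measurable_const.imp <|
      measurable_const.imp <| measurableSet_setOfPred.1 <|
        measurableSet_lt ((hX i).dist (hX j)) ((hX i).dist (hX k))
  exact hmeas.nullMeasurableSet.congr
    (eventuallyEq_set.2 (hN.mono fun ω hω => (hω.eq_iff hn hi j).symm))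

lemma nullMeasurableSet_setOf_eq_eq_of_ae_isNNFun (hX : ∀ i, Measurable (X i))
    (hN : ∀ᵐ ω ∂P, IsNNFun X N ω) {i' : ℕ} (hn : 2 ≤ n) (hi : i < n) (hi' : i' < n) :
    NullMeasurableSet {ω | N n i ω = N n i' ω} P := by
  have : {ω | N n i ω = N n i' ω} = ⋃ j, {ω | N n i ω = j} ∩ {ω | N n i' ω = j} := by
    ext ω; simp [eq_comm]
  rw [this]
  exact .iUnion fun j => (nullMeasurableSet_setOf_eq_of_ae_isNNFun hX hN hn hi j).inter
    (nullMeasurableSet_setOf_eq_of_ae_isNNFun hX hN hn hi' j)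

end NullMeasurable

lemma tendsto_measure_zero_of_ae_eventually_notMem {α : Type*} [MeasurableSpace α]
    {μ : Measure α} [IsFiniteMeasure μ] {A : ℕ → Set α} (hA : ∀ n, NullMeasurableSet (A n) μ)
    (h : ∀ᵐ x ∂μ, ∀ᶠ n in atTop, x ∉ A n) : Tendsto (fun n => μ (A n)) atTop (𝓝 0) := by
  have hae : ∀ᵐ x ∂μ, ∀ n, x ∈ toMeasurable μ (A n) ↔ x ∈ A n :=
    ae_all_iff.2 fun n => eventuallyEq_set.1 (hA n).toMeasurable_ae_eq
  have := tendsto_measure_of_ae_tendsto_indicator_of_isFiniteMeasure atTop MeasurableSet.empty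
    (fun n => measurableSet_toMeasurable μ (A n)) (by
      filter_upwards [h, hae] with x hx hx'
      simpa [hx'] using hx)
  simpa [measure_toMeasurable] using this

lemma ae_frequently_mem_of_iIndepFun {Ω E : Type*} [MeasurableSpace Ω] [MeasurableSpace E]
    {P : Measure Ω} [IsProbabilityMeasure P] {X : ℕ → Ω → E} (hX : ∀ i, Measurable (X i))
    (hind : iIndepFun X P) (hident : ∀ i, IdentDistrib (X i) (X 0) P P) {s : Set E}
    (hs : MeasurableSet s) (hpos : P.map (X 0) s ≠ 0) :
    ∀ᵐ ω ∂P, ∃ᶠ j in atTop, X j ω ∈ s := by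
  have hsm : ∀ j, MeasurableSet (X j ⁻¹' s) := fun j => hX j hs
  have hindep : iIndepSet (fun j => X j ⁻¹' s) P :=
    (iIndepSet_iff_meas_biInter hsm).2 fun S =>
      hind.measure_inter_preimage_eq_mul S fun _ _ => hs
  have hprob : ∀ j, P (X j ⁻¹' s) = P.map (X 0) s := fun j => by
    rw [← (hident j).map_eq, Measure.map_apply (hX j) hs]
  have hlimsup : P (limsup (fun j => X j ⁻¹' s) atTop) = 1 :=
    measure_limsup_eq_one hsm hindep <| by
      simp_rw [hprob]; exact ENNReal.tsum_const_eq_top_of_ne_zero hpos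
  have hae : ∀ᵐ ω ∂P, ω ∈ limsup (fun j => X j ⁻¹' s) atTop :=
    (prob_compl_eq_zero_iff (MeasurableSet.measurableSet_limsup hsm)).2 hlimsup
  filter_upwards [hae] with ω hω
  exact mem_limsup_iff_frequently_mem.1 hω

open TopologicalSpace in
theorem ae_mapClusterPt_of_iIndepFun {Ω E : Type*} [MeasurableSpace Ω] [TopologicalSpace E]
    [SecondCountableTopology E] [MeasurableSpace E] [OpensMeasurableSpace E]
    {P : Measure Ω} [IsProbabilityMeasure P] {X : ℕ → Ω → E} (hX : ∀ i, Measurable (X i))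
    (hind : iIndepFun X P) (hident : ∀ i, IdentDistrib (X i) (X 0) P P) :
    ∀ᵐ ω ∂P, ∀ i, MapClusterPt (X i ω) atTop fun j => X j ω := by
  set μ := P.map (X 0)
  have hsupp : ∀ i, ∀ᵐ ω ∂P, X i ω ∈ μ.support := fun i =>
    ae_of_ae_map (hX i).aemeasurable <| (hident i).map_eq ▸ Measure.support_mem_ae
  have hhit : ∀ᵐ ω ∂P, ∀ U ∈ countableBasis E, 0 < μ U → ∃ᶠ j in atTop, X j ω ∈ U :=
    (ae_ball_iff (countable_countableBasis E)).2 fun U hU => eventually_imp_distrib_left.2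
      fun hpos => ae_frequently_mem_of_iIndepFun hX hind hident
        (isOpen_of_mem_countableBasis hU).measurableSet hpos.ne'
  filter_upwards [ae_all_iff.2 hsupp, hhit] with ω hsupp hhit i
  rw [(isBasis_countableBasis E).nhds_hasBasis.mapClusterPt_iff_frequently]
  rintro U ⟨hU, hxU⟩
  exact hhit U hU <| (Measure.mem_support_iff_forall _).1 (hsupp i) U
    ((isOpen_of_mem_countableBasis hU).mem_nhds hxU)

/-- The samples are indexed from `0`, so `X_1, X_2` of the paper are `X 0, X 1`. -/
theorem nearest_neighbour_convergence {Ω H : Type*} [MeasurableSpace Ω] [MetricSpace H]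
    [MeasurableSpace H] [BorelSpace H] [TopologicalSpace.SeparableSpace H]
    (P : Measure Ω) [IsProbabilityMeasure P]
    (X : ℕ → Ω → H) (hXm : ∀ i, Measurable (X i))
    (hiid : iIndepFun X P)
    (hident : ∀ i, IdentDistrib (X i) (X 0) P P)
    (N : ℕ → ℕ → Ω → ℕ) (hN : ∀ᵐ ω ∂P, IsNNFun X N ω) :
    (∀ᵐ ω ∂P, Filter.Tendsto (fun n => dist (X (N n 0 ω) ω) (X 0 ω))
      Filter.atTop (nhds 0)) ∧
    Filter.Tendsto (fun n => P {ω | N n 0 ω = N n 1 ω}) Filter.atTop (nhds 0) := by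
  have := UniformSpace.secondCountable_of_separable H
  have hcluster := ae_mapClusterPt_of_iIndepFun hXm hiid hident
  refine ⟨?_, ?_⟩
  · filter_upwards [hN, hcluster] with ω hω hc
    exact hω.tendsto_dist (hc 0)
  · -- `N n` is only constrained for `n ≥ 2`, so the events are null-measurable only from there on
    rw [← tendsto_add_atTop_iff_nat 2]
    refine tendsto_measure_zero_of_ae_eventually_notMem (fun n =>
      nullMeasurableSet_setOf_eq_eq_of_ae_isNNFun hXm hN (by omega) (by omega) (by omega)) ?_
    filter_upwards [hN, hcluster] with ω hω hc
    exact (tendsto_add_atTop_nat 2).eventually (hω.eventually_ne zero_ne_one (hc 0) (hc 1))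
end
end

section
/- det(Σ) = (1+w)^{K(K−1)/2} · (1−w)^{(K−1)(K−2)/2} · ∏_{i=1}^{K} p_i^{2(K−1)}. -/
/-!
With `q k = p_{k+1}` and `M = 𝟙 qᵀ - 1` (so `M k l = p_{l+1} - δ_{kl}`), the matrix factors as
`Σ = (diag q ⊗ diag q) (1 + w P) (M ⊗ M)`, where `P` is the permutation matrix of
`(k, l) ↦ (l, k)`. By the matrix determinant lemma `det M = ± (1 - ∑ q) = ± p_K`.
Ordering the pairs as diagonal pairs, pairs `k < l` and pairs `k > l` turns `1 + w P` into
`(1 + w) 1` on the diagonal pairs and `[[1, w], [w, 1]]` on each orbit `{(k, l), (l, k)}`,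
whence `det (1 + w P) = (1 + w)^(K-1) (1 - w²)^((K-1)(K-2)/2)`.
-/

open Matrix Kronecker

section PairSwap

variable {ι R : Type*} [LinearOrder ι] [CommRing R]

def diagSumOffDiagEquiv :
    ι ⊕ ({x : ι × ι // x.1 < x.2} ⊕ {x : ι × ι // x.1 < x.2}) ≃ ι × ι where
  toFun := Sum.elim (fun i => (i, i)) (Sum.elim Subtype.val fun x => x.1.swap)
  invFun x :=
    if h : x.1 < x.2 then .inr (.inl ⟨x, h⟩)
    else if h' : x.2 < x.1 then .inr (.inr ⟨x.swap, h'⟩) else .inl x.1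
  left_inv := by
    rintro (i | ⟨x, h⟩ | ⟨x, h⟩)
    · simp
    · simp [h]
    · simp [h, h.not_gt]
  right_inv := by
    rintro ⟨a, b⟩
    rcases lt_trichotomy a b with h | rfl | h
    · simp [h]
    · simp
    · simp [h, h.not_gt]

theorem card_pairs_fst_lt_snd [Fintype ι] :
    Fintype.card {x : ι × ι // x.1 < x.2} = Fintype.card ι * (Fintype.card ι - 1) / 2 := by
  have h := Fintype.card_congr (diagSumOffDiagEquiv (ι := ι))
  simp only [Fintype.card_sum, Fintype.card_prod] at h
  rw [Nat.mul_sub_one]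
  omega

theorem submatrix_one_add_smul_permMatrix_prodComm (w : R) :
    (1 + w • Equiv.Perm.permMatrix R (Equiv.prodComm ι ι)).submatrix
        diagSumOffDiagEquiv diagSumOffDiagEquiv =
      fromBlocks ((1 + w) • 1) 0 0 (fromBlocks 1 (w • 1) (w • 1) 1) := by
  ext (i | ⟨x, hx⟩ | ⟨x, hx⟩) (j | ⟨y, hy⟩ | ⟨y, hy⟩) <;>
    simp only [diagSumOffDiagEquiv, Equiv.coe_fn_mk, submatrix_apply, Sum.elim_inl, Sum.elim_inr,
      fromBlocks_apply₁₁, fromBlocks_apply₁₂, fromBlocks_apply₂₁, fromBlocks_apply₂₂,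
      Matrix.add_apply, Matrix.smul_apply, Matrix.zero_apply, one_apply, PEquiv.toMatrix_apply,
      Equiv.toPEquiv_apply, Equiv.prodComm_apply, Option.mem_def, Option.some.injEq, Prod.ext_iff,
      Prod.fst_swap, Prod.snd_swap, Subtype.mk.injEq, smul_eq_mul] <;>
    grind

theorem det_one_add_smul_permMatrix_prodComm [Fintype ι] (w : R) :
    (1 + w • Equiv.Perm.permMatrix R (Equiv.prodComm ι ι)).det =
      (1 + w) ^ (Fintype.card ι * (Fintype.card ι + 1) / 2) *
        (1 - w) ^ (Fintype.card ι * (Fintype.card ι - 1) / 2) := by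
  have hsub : (1 : Matrix {x : ι × ι // x.1 < x.2} {x : ι × ι // x.1 < x.2} R) - (w * w) • 1 =
      (1 - w * w) • 1 := by
    rw [sub_smul, one_smul]
  have hexp : Fintype.card ι * (Fintype.card ι + 1) / 2 =
      Fintype.card ι + Fintype.card ι * (Fintype.card ι - 1) / 2 := by
    have := Nat.le_mul_self (Fintype.card ι)
    rw [Nat.mul_add_one, Nat.mul_sub_one]
    omega
  rw [← det_submatrix_equiv_self diagSumOffDiagEquiv, submatrix_one_add_smul_permMatrix_prodComm,
    det_fromBlocks_zero₁₂, det_fromBlocks_one₁₁, smul_mul_smul_comm, Matrix.one_mul, hsub,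
    det_smul, det_smul, det_one, det_one, mul_one, mul_one, card_pairs_fst_lt_snd, hexp, pow_add,
    show 1 - w * w = (1 + w) * (1 - w) by ring, mul_pow, mul_assoc]

end PairSwap

section Sigma

variable {ι R : Type*} [Fintype ι] [DecidableEq ι] [CommRing R]

theorem det_replicateRow_sub_one (q : ι → R) :
    (replicateRow ι q - 1).det = (-1) ^ Fintype.card ι * (1 - ∑ i, q i) := by
  have hrank_one :
      replicateRow ι q = replicateCol Unit (fun _ => (1 : R)) * replicateRow Unit q := by
    ext i j
    simp [mul_apply]
  rw [← neg_sub, det_neg, hrank_one, det_one_sub_mul_comm, det_unique]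
  simp [mul_apply]

def sigmaMatrix (q : ι → R) (w : R) : Matrix (ι × ι) (ι × ι) R :=
  of fun a b =>
    q a.1 * q a.2 * q b.1 * q b.2 * (1 + w)
      - q a.1 * q a.2 * q b.2 * ((if a.1 = b.1 then 1 else 0) + w * (if a.2 = b.1 then 1 else 0))
      - q a.1 * q a.2 * q b.1 * ((if a.2 = b.2 then 1 else 0) + w * (if a.1 = b.2 then 1 else 0))
      + q a.1 * q a.2 * ((if a.1 = b.1 ∧ a.2 = b.2 then 1 else 0) +
          w * (if a.1 = b.2 ∧ a.2 = b.1 then 1 else 0))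

theorem sigmaMatrix_eq_mul (q : ι → R) (w : R) :
    sigmaMatrix q w =
      (diagonal q ⊗ₖ diagonal q) * (1 + w • Equiv.Perm.permMatrix R (Equiv.prodComm ι ι)) *
        ((replicateRow ι q - 1) ⊗ₖ (replicateRow ι q - 1)) := by
  ext a b
  simp only [sigmaMatrix, mul_ite, mul_one, mul_zero, ite_and, of_apply,
    diagonal_kronecker_diagonal, Matrix.mul_assoc, add_mul, one_mul, Algebra.smul_mul_assoc,
    PEquiv.toMatrix_toPEquiv_mul, Equiv.coe_prodComm, diagonal_mul, Matrix.add_apply,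
    kroneckerMap_apply, Matrix.sub_apply, replicateRow_apply, one_apply, Matrix.smul_apply,
    submatrix_apply, id_eq, Prod.fst_swap, Prod.snd_swap, smul_eq_mul]
  split_ifs <;> ring

end Sigma

theorem det_sigmaMatrix {ι R : Type*} [Fintype ι] [LinearOrder ι] [CommRing R] (q : ι → R) (w : R) :
    (sigmaMatrix q w).det =
      (1 + w) ^ (Fintype.card ι * (Fintype.card ι + 1) / 2) *
        (1 - w) ^ (Fintype.card ι * (Fintype.card ι - 1) / 2) *
        ((∏ i, q i) * (1 - ∑ i, q i)) ^ (2 * Fintype.card ι) := by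
  rw [sigmaMatrix_eq_mul, det_mul, det_mul, det_kronecker, det_kronecker, det_diagonal,
    det_one_add_smul_permMatrix_prodComm, det_replicateRow_sub_one, ← pow_add, ← pow_add,
    ← two_mul, mul_pow, ← pow_mul, Even.neg_one_pow ⟨Fintype.card ι * Fintype.card ι, by ring⟩,
    mul_pow (∏ i, q i)]
  ring

@[to_additive Fin.sum_univ_eq_sum_Icc_one]
theorem Fin.prod_univ_eq_prod_Icc_one {M : Type*} [CommMonoid M] (f : ℕ → M) (n : ℕ) :
    ∏ i : Fin n, f (i + 1) = ∏ i ∈ Finset.Icc 1 n, f i := by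
  rw [Fin.prod_univ_eq_prod_range (fun i => f (i + 1)), ← Finset.Ico_add_one_right_eq_Icc,
    Finset.prod_Ico_eq_prod_range, add_tsub_cancel_right]
  simp only [add_comm]

theorem det_Sigma_general (K : ℕ) (p : ℕ → ℝ) (w : ℝ)
    (hpK : p K = 1 - ∑ i ∈ Finset.Icc 1 (K - 1), p i)
    (S : Matrix (Fin (K - 1) × Fin (K - 1)) (Fin (K - 1) × Fin (K - 1)) ℝ)
    (hS : ∀ a b : Fin (K - 1) × Fin (K - 1),
      S a b =
        p ((a.1 : ℕ) + 1) * p ((a.2 : ℕ) + 1) * p ((b.1 : ℕ) + 1) * p ((b.2 : ℕ) + 1) * (1 + w)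
        - p ((a.1 : ℕ) + 1) * p ((a.2 : ℕ) + 1) * p ((b.2 : ℕ) + 1) *
            ((if (a.1 : ℕ) = (b.1 : ℕ) then 1 else 0) +
              w * (if (a.2 : ℕ) = (b.1 : ℕ) then 1 else 0))
        - p ((a.1 : ℕ) + 1) * p ((a.2 : ℕ) + 1) * p ((b.1 : ℕ) + 1) *
            ((if (a.2 : ℕ) = (b.2 : ℕ) then 1 else 0) +
              w * (if (a.1 : ℕ) = (b.2 : ℕ) then 1 else 0))
        + p ((a.1 : ℕ) + 1) * p ((a.2 : ℕ) + 1) *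
            ((if (a.1 : ℕ) = (b.1 : ℕ) ∧ (a.2 : ℕ) = (b.2 : ℕ) then 1 else 0) +
              w * (if (a.1 : ℕ) = (b.2 : ℕ) ∧ (a.2 : ℕ) = (b.1 : ℕ) then 1 else 0))) :
    S.det = (1 + w) ^ (K * (K - 1) / 2) * (1 - w) ^ ((K - 1) * (K - 2) / 2) *
      ∏ i ∈ Finset.Icc 1 K, p i ^ (2 * (K - 1)) := by
  obtain _ | n := K
  · simp
  simp only [Nat.add_sub_cancel] at hpK ⊢
  have hS_eq : S = sigmaMatrix (fun i : Fin n => p (i + 1)) w := by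
    ext a b
    simp only [hS, sigmaMatrix, of_apply, Fin.val_inj]
  rw [hS_eq, det_sigmaMatrix, Fintype.card_fin, Fin.prod_univ_eq_prod_Icc_one p,
    Fin.sum_univ_eq_sum_Icc_one p, ← hpK, ← Finset.prod_Icc_succ_top (by omega), Finset.prod_pow,
    mul_comm (n + 1) n, show n + 1 - 2 = n - 1 by omega]

/-- Lemma S2 (determinant of `Σ`): with `p_K := 1 − Σ_{i=1}^{K−1} p_i`,
`det Σ = (1+w)^{K(K−1)/2} (1−w)^{(K−1)(K−2)/2} ∏_{i=1}^K p_i^{2(K−1)}`.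
The rows and columns of `Σ` are indexed by pairs `(a,b) : Fin (K−1) × Fin (K−1)`,
encoding the indices `k = a+1`, `l = b+1` of the paper. -/
theorem det_Sigma (K : ℕ) (hK : 2 ≤ K) (p : ℕ → ℝ) (w : ℝ)
    (hpK : p K = 1 - ∑ i ∈ Finset.Icc 1 (K - 1), p i)
    (S : Matrix (Fin (K - 1) × Fin (K - 1)) (Fin (K - 1) × Fin (K - 1)) ℝ)
    (hS : ∀ a b : Fin (K - 1) × Fin (K - 1),
      S a b =
        p ((a.1 : ℕ) + 1) * p ((a.2 : ℕ) + 1) * p ((b.1 : ℕ) + 1) * p ((b.2 : ℕ) + 1) * (1 + w)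
        - p ((a.1 : ℕ) + 1) * p ((a.2 : ℕ) + 1) * p ((b.2 : ℕ) + 1) *
            ((if (a.1 : ℕ) = (b.1 : ℕ) then 1 else 0) +
              w * (if (a.2 : ℕ) = (b.1 : ℕ) then 1 else 0))
        - p ((a.1 : ℕ) + 1) * p ((a.2 : ℕ) + 1) * p ((b.1 : ℕ) + 1) *
            ((if (a.2 : ℕ) = (b.2 : ℕ) then 1 else 0) +
              w * (if (a.1 : ℕ) = (b.2 : ℕ) then 1 else 0))
        + p ((a.1 : ℕ) + 1) * p ((a.2 : ℕ) + 1) *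
            ((if (a.1 : ℕ) = (b.1 : ℕ) ∧ (a.2 : ℕ) = (b.2 : ℕ) then 1 else 0) +
              w * (if (a.1 : ℕ) = (b.2 : ℕ) ∧ (a.2 : ℕ) = (b.1 : ℕ) then 1 else 0))) :
    S.det = (1 + w) ^ (K * (K - 1) / 2) * (1 - w) ^ ((K - 1) * (K - 2) / 2) *
      ∏ i ∈ Finset.Icc 1 K, p i ^ (2 * (K - 1)) :=
  det_Sigma_general K p w hpK S hS
end
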